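/- arXiv:1210.2057 — 7 statements merged into one kernel-verified Lean document; each statement's English description precedes it below -/
import Mathlib

section
/- Let $\Lambda = \{\lambda_n\}$ be a nondecreasing sequence of positive reals. For any finite nonincreasing sequence of nonnegative reals $a_1 \geq a_2 \geq \cdots \geq a_m \geq 0$ and any real $p \geq 1$, one has $\left(\sum_{k=1}^m a_k^p\right)^{1/p} \leq \left(\sum_{k=1}^m \frac{a_k}{\lambda_k}\right) \cdot \sup_{1 \leq j \leq m} \frac{j^{1/p}}{\sum_{i=1}^j (1/\lambda_i)}$. -/
open Finset in
lemma diff_rpow_mono {p : ℝ} (hp : 1 ≤ p) {x y c : ℝ} (hx : 0 ≤ x) (hxy : x ≤ y) (hc : 0 ≤ c) :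
    (x + c) ^ p - x ^ p ≤ (y + c) ^ p - y ^ p := by
  have hd : ∀ t : ℝ, HasDerivAt (fun t : ℝ => (t + c) ^ p - t ^ p)
      (p * (t + c) ^ (p - 1) * 1 - p * t ^ (p - 1)) t := by
    intro t
    have h1 : HasDerivAt (fun t : ℝ => t + c) 1 t := (hasDerivAt_id t).add_const c
    have h2 := (Real.hasDerivAt_rpow_const (x := t + c) (p := p) (Or.inr hp)).comp t h1
    exact h2.sub (Real.hasDerivAt_rpow_const (x := t) (p := p) (Or.inr hp))
  have hmono : MonotoneOn (fun t : ℝ => (t + c) ^ p - t ^ p) (Set.Ici 0) := by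
    apply monotoneOn_of_deriv_nonneg (convex_Ici 0)
    · exact (Differentiable.continuous fun t => (hd t).differentiableAt).continuousOn
    · exact fun t _ => (hd t).differentiableAt.differentiableWithinAt
    · intro t ht
      rw [interior_Ici] at ht
      rw [(hd t).deriv]
      have h0 : (0:ℝ) ≤ t := le_of_lt ht
      have : t ^ (p - 1) ≤ (t + c) ^ (p - 1) :=
        Real.rpow_le_rpow h0 (le_add_of_nonneg_right hc) (by linarith)
      have hp0 : (0:ℝ) ≤ p := by linarith
      nlinarith
  exact hmono hx (le_trans hx hxy) hxy

open Finset in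
lemma lp_le_weighted {p : ℝ} (hp : 1 ≤ p) (m : ℕ) (a : ℕ → ℝ)
    (hnonneg : ∀ k < m, 0 ≤ a k) (hanti : ∀ i j, i ≤ j → j < m → a j ≤ a i) :
    ∑ k ∈ range m, a k ^ p ≤
      (∑ k ∈ range m, a k * (((k:ℝ) + 1) ^ (1/p) - (k:ℝ) ^ (1/p))) ^ p := by
  have hp0 : (0:ℝ) < p := by linarith
  have hip : (0:ℝ) ≤ 1/p := by positivity
  induction m with
  | zero => simp [Real.zero_rpow (ne_of_gt hp0)]
  | succ m ih =>
    have hnn' : ∀ k < m, 0 ≤ a k := fun k hk => hnonneg k (hk.trans (Nat.lt_succ_self m))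
    have hanti' : ∀ i j, i ≤ j → j < m → a j ≤ a i :=
      fun i j hij hj => hanti i j hij (hj.trans (Nat.lt_succ_self m))
    have ham : 0 ≤ a m := hnonneg m (Nat.lt_succ_self m)
    set R := ∑ k ∈ range m, a k * (((k:ℝ) + 1) ^ (1/p) - (k:ℝ) ^ (1/p)) with hR
    have hS := ih hnn' hanti'
    have hDnn : ∀ k : ℕ, (0:ℝ) ≤ ((k:ℝ) + 1) ^ (1/p) - (k:ℝ) ^ (1/p) := fun k =>
      sub_nonneg.mpr (Real.rpow_le_rpow (Nat.cast_nonneg k) (by linarith) hip)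
    -- R ≥ a m * m^(1/p)
    have hRlb : a m * (m:ℝ) ^ (1/p) ≤ R := by
      have : ∑ k ∈ range m, a m * (((k:ℝ) + 1) ^ (1/p) - (k:ℝ) ^ (1/p)) ≤ R := by
        apply Finset.sum_le_sum
        intro k hk
        exact mul_le_mul_of_nonneg_right
          (hanti k m (le_of_lt (mem_range.mp hk)) (Nat.lt_succ_self m)) (hDnn k)
      calc a m * (m:ℝ) ^ (1/p)
          = ∑ k ∈ range m, a m * (((k:ℝ) + 1) ^ (1/p) - (k:ℝ) ^ (1/p)) := by
            rw [← Finset.mul_sum]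
            have : ∑ k ∈ range m, (((k:ℝ) + 1) ^ (1/p) - (k:ℝ) ^ (1/p)) = (m:ℝ) ^ (1/p) := by
              have := Finset.sum_range_sub (fun k : ℕ => ((k:ℝ)) ^ (1/p)) m
              simp only [Nat.cast_add, Nat.cast_one] at this ⊢
              rw [this, Nat.cast_zero, Real.zero_rpow (by positivity : (1:ℝ)/p ≠ 0), sub_zero]
            rw [this]
        _ ≤ R := this
    have hRnn : 0 ≤ R := Finset.sum_nonneg fun k hk =>
      mul_nonneg (hnn' k (mem_range.mp hk)) (hDnn k)
    rw [Finset.sum_range_succ, Finset.sum_range_succ]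
    -- key: a m ^ p ≤ (R + a m * Δ)^p - R^p
    have key : a m ^ p ≤ (R + a m * (((m:ℝ) + 1) ^ (1/p) - (m:ℝ) ^ (1/p))) ^ p - R ^ p := by
      have hx : (0:ℝ) ≤ a m * (m:ℝ) ^ (1/p) := mul_nonneg ham (Real.rpow_nonneg (Nat.cast_nonneg m) _)
      have hc : (0:ℝ) ≤ a m * (((m:ℝ) + 1) ^ (1/p) - (m:ℝ) ^ (1/p)) := mul_nonneg ham (hDnn m)
      have h := diff_rpow_mono hp hx hRlb hc
      have e1 : a m * (m:ℝ) ^ (1/p) + a m * (((m:ℝ) + 1) ^ (1/p) - (m:ℝ) ^ (1/p))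
          = a m * ((m:ℝ) + 1) ^ (1/p) := by ring
      have epow : ∀ t : ℝ, 0 ≤ t → (a m * t ^ (1/p)) ^ p = a m ^ p * t := by
        intro t ht
        rw [Real.mul_rpow ham (Real.rpow_nonneg ht _), ← Real.rpow_mul ht,
          one_div_mul_cancel (ne_of_gt hp0), Real.rpow_one]
      have e2 : (a m * (m:ℝ) ^ (1/p)) ^ p = a m ^ p * m := epow m (Nat.cast_nonneg m)
      have e3 : (a m * ((m:ℝ) + 1) ^ (1/p)) ^ p = a m ^ p * ((m:ℝ) + 1) := epow _ (by positivity)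
      rw [e1, e3, e2] at h
      nlinarith
    linarith

open Finset in
lemma abel_compare (m : ℕ) (a u v : ℕ → ℝ)
    (hnonneg : ∀ k < m, 0 ≤ a k) (hanti : ∀ i j, i ≤ j → j < m → a j ≤ a i)
    (hps : ∀ j ≤ m, ∑ k ∈ range j, u k ≤ ∑ k ∈ range j, v k) :
    ∑ k ∈ range m, a k * u k ≤ ∑ k ∈ range m, a k * v k := by
  have key : 0 ≤ ∑ k ∈ range m, a k * (v k - u k) := by
    have := Finset.sum_range_by_parts (f := a) (g := fun k => v k - u k) (n := m)
    simp only [smul_eq_mul] at this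
    rw [this]
    have hW : ∀ j ≤ m, 0 ≤ ∑ k ∈ range j, (v k - u k) := by
      intro j hj
      rw [Finset.sum_sub_distrib]
      linarith [hps j hj]
    rcases Nat.eq_zero_or_pos m with hm0 | hm0
    · simp [hm0]
    · have h1 : 0 ≤ a (m - 1) * ∑ k ∈ range m, (v k - u k) := by
        apply mul_nonneg (hnonneg _ (Nat.sub_lt hm0 one_pos)) (hW m le_rfl)
      have h2 : ∑ i ∈ range (m - 1), (a (i + 1) - a i) * ∑ k ∈ range (i + 1), (v k - u k) ≤ 0 := by
        apply Finset.sum_nonpos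
        intro i hi
        have hi' : i + 1 < m := by
          have := mem_range.mp hi; omega
        apply mul_nonpos_of_nonpos_of_nonneg
        · have := hanti i (i + 1) (Nat.le_succ i) hi'
          linarith
        · exact hW (i + 1) (le_of_lt hi')
      linarith
  have : ∑ k ∈ range m, a k * (v k - u k)
      = ∑ k ∈ range m, a k * v k - ∑ k ∈ range m, a k * u k := by
    rw [← Finset.sum_sub_distrib]; congr 1; ext k; ring
  linarith [this ▸ key]

open Finset in
/-- Kuprikov-style estimate comparing an `ℓ^p` norm of a nonincreasing
nonnegative sequence with the Waterman-weighted sum. -/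
theorem kuprikov_estimate (lam : ℕ → ℝ) (hpos : ∀ n, 0 < lam n) (hmono : Monotone lam)
    (m : ℕ) (hm : 1 ≤ m) (a : ℕ → ℝ)
    (hnonneg : ∀ k < m, 0 ≤ a k)
    (hanti : ∀ i j, i ≤ j → j < m → a j ≤ a i)
    (p : ℝ) (hp : 1 ≤ p) :
    (∑ k ∈ Finset.range m, a k ^ p) ^ (1 / p) ≤
      (∑ k ∈ Finset.range m, a k / lam k) *
        (Finset.Icc 1 m).sup' (Finset.nonempty_Icc.mpr hm)
          (fun j => (j : ℝ) ^ (1 / p) / ∑ i ∈ Finset.range j, 1 / lam i) := by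
  have hp0 : (0:ℝ) < p := by linarith
  set C := (Finset.Icc 1 m).sup' (Finset.nonempty_Icc.mpr hm)
      (fun j => (j : ℝ) ^ (1 / p) / ∑ i ∈ Finset.range j, 1 / lam i) with hCdef
  have hL : ∀ j, 1 ≤ j → 0 < ∑ i ∈ range j, 1 / lam i := by
    intro j hj
    apply Finset.sum_pos (fun i _ => one_div_pos.mpr (hpos i))
    exact ⟨0, mem_range.mpr hj⟩
  have hCpos : 0 < C := by
    have h1 : ((1:ℕ):ℝ) ^ (1/p) / ∑ i ∈ range 1, 1 / lam i ≤ C :=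
      Finset.le_sup' (fun j : ℕ => (j:ℝ) ^ (1/p) / ∑ i ∈ range j, 1 / lam i)
        (Finset.mem_Icc.mpr ⟨le_rfl, hm⟩)
    rw [Nat.cast_one] at h1
    have := hL 1 le_rfl
    calc (0:ℝ) < (1:ℝ) ^ (1/p) / ∑ i ∈ range 1, 1 / lam i := by
          rw [Real.one_rpow]; positivity
      _ ≤ C := h1
  have hC : ∀ j, 1 ≤ j → j ≤ m → (j:ℝ) ^ (1/p) ≤ C * ∑ i ∈ range j, 1 / lam i := by
    intro j h1 h2
    have hle : (j:ℝ) ^ (1/p) / ∑ i ∈ range j, 1 / lam i ≤ C :=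
      Finset.le_sup' (fun j : ℕ => (j:ℝ) ^ (1/p) / ∑ i ∈ range j, 1 / lam i)
        (Finset.mem_Icc.mpr ⟨h1, h2⟩)
    have := hL j h1
    rw [div_le_iff₀ this] at hle
    linarith [hle]
  have hT : 0 ≤ ∑ k ∈ range m, a k / lam k :=
    Finset.sum_nonneg fun k hk => div_nonneg (hnonneg k (mem_range.mp hk)) (hpos k).le
  -- step 1: lp bound
  have h1 := lp_le_weighted hp m a hnonneg hanti
  -- step 2: abel compare
  have h2 : ∑ k ∈ range m, a k * (((k:ℝ) + 1) ^ (1/p) - (k:ℝ) ^ (1/p)) ≤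
      ∑ k ∈ range m, a k * (C * (1 / lam k)) := by
    apply abel_compare m a _ _ hnonneg hanti
    intro j hj
    have tel : ∑ k ∈ range j, (((k:ℝ) + 1) ^ (1/p) - (k:ℝ) ^ (1/p)) = (j:ℝ) ^ (1/p) := by
      have := Finset.sum_range_sub (fun k : ℕ => ((k:ℝ)) ^ (1/p)) j
      simp only [Nat.cast_add, Nat.cast_one] at this ⊢
      rw [this, Nat.cast_zero, Real.zero_rpow (by positivity : (1:ℝ)/p ≠ 0), sub_zero]
    rw [tel, ← Finset.mul_sum]
    rcases Nat.eq_zero_or_pos j with h0 | h0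
    · simp [h0, Real.zero_rpow (inv_ne_zero (ne_of_gt hp0)), Real.zero_rpow (by positivity : (1:ℝ)/p ≠ 0)]
    · exact hC j h0 hj
  have h2' : ∑ k ∈ range m, a k * (C * (1 / lam k)) =
      (∑ k ∈ range m, a k / lam k) * C := by
    rw [Finset.sum_mul]; congr 1; ext k; ring
  rw [h2'] at h2
  -- combine
  have hRnn : 0 ≤ ∑ k ∈ range m, a k * (((k:ℝ) + 1) ^ (1/p) - (k:ℝ) ^ (1/p)) :=
    Finset.sum_nonneg fun k hk => mul_nonneg (hnonneg k (mem_range.mp hk))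
      (sub_nonneg.mpr (Real.rpow_le_rpow (Nat.cast_nonneg k) (by linarith) (by positivity)))
  have hSnn : 0 ≤ ∑ k ∈ range m, a k ^ p :=
    Finset.sum_nonneg fun k hk => Real.rpow_nonneg (hnonneg k (mem_range.mp hk)) p
  have hfin : ∑ k ∈ range m, a k ^ p ≤ ((∑ k ∈ range m, a k / lam k) * C) ^ p :=
    h1.trans (Real.rpow_le_rpow hRnn h2 hp0.le)
  calc (∑ k ∈ range m, a k ^ p) ^ (1/p)
      ≤ (((∑ k ∈ range m, a k / lam k) * C) ^ p) ^ (1/p) :=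
        Real.rpow_le_rpow hSnn hfin (by positivity)
    _ = (∑ k ∈ range m, a k / lam k) * C := by
        rw [← Real.rpow_mul (by positivity), mul_one_div_cancel (ne_of_gt hp0), Real.rpow_one]
end

section
/- Let $\Lambda = \{\lambda_n\}$ be a nondecreasing sequence of positive reals with $\lambda_1 > 1$. If $\limsup_{n\to\infty} \sup_{1 \leq m \leq 2^n} \frac{m^{1/p(n)}}{\sum_{j=1}^m (1/\lambda_j)} < \infty$, then every function $f : [0,1]^2 \to \mathbb{R}$ of bounded $\Lambda^{\#}$-variation belongs to the class $BV^{\#}(p(n) \uparrow \infty)$; that is, $\Lambda^{\#}BV \subset BV^{\#}(p(n) \uparrow \infty)$. -/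
/-- A finite collection of `m` nonoverlapping open subintervals `(a i, b i)` of `[0,1]`. -/
def Nonoverlap (m : ℕ) (a b : ℕ → ℝ) : Prop :=
  (∀ i < m, 0 ≤ a i ∧ a i < b i ∧ b i ≤ 1) ∧
  ∀ i < m, ∀ j < m, i ≠ j → Set.Ioo (a i) (b i) ∩ Set.Ioo (a j) (b j) = ∅

/-- `Λ^{#}V_1(f) ≤ M`: all Waterman-type sums in the first variable, with a separate
point `y i` for each interval, are bounded by `M`. -/
def LamSharpV1 (lam : ℕ → ℝ) (f : ℝ → ℝ → ℝ) (M : ℝ) : Prop :=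
  ∀ (m : ℕ) (a b y : ℕ → ℝ), Nonoverlap m a b → (∀ i < m, y i ∈ Set.Icc (0:ℝ) 1) →
    ∑ i ∈ Finset.range m, |f (b i) (y i) - f (a i) (y i)| / lam i ≤ M

/-- `Λ^{#}V_2(f) ≤ M`: the symmetric condition in the second variable. -/
def LamSharpV2 (lam : ℕ → ℝ) (f : ℝ → ℝ → ℝ) (M : ℝ) : Prop :=
  ∀ (m : ℕ) (a b x : ℕ → ℝ), Nonoverlap m a b → (∀ i < m, x i ∈ Set.Icc (0:ℝ) 1) →
    ∑ i ∈ Finset.range m, |f (x i) (b i) - f (x i) (a i)| / lam i ≤ M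

/-- The class `Λ^{#}BV`. -/
def LamSharpBV (lam : ℕ → ℝ) (f : ℝ → ℝ → ℝ) : Prop :=
  ∃ M : ℝ, LamSharpV1 lam f M ∧ LamSharpV2 lam f M

/-- `V_1^{#}(f, p(n) ↑ ∞) ≤ M`: for every `n`, every collection of nonoverlapping
intervals of lengths at least `2⁻ⁿ` and every choice of points `y i`, the `ℓ^{p(n)}`
sum of increments in the first variable is at most `M`. -/
def BVSharpV1 (p : ℕ → ℝ) (f : ℝ → ℝ → ℝ) (M : ℝ) : Prop :=
  ∀ (n m : ℕ) (a b y : ℕ → ℝ), Nonoverlap m a b →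
    (∀ i < m, 1 / 2 ^ n ≤ b i - a i) →
    (∀ i < m, y i ∈ Set.Icc (0:ℝ) 1) →
    (∑ i ∈ Finset.range m, |f (b i) (y i) - f (a i) (y i)| ^ p n) ^ (1 / p n) ≤ M

/-- `V_2^{#}(f, p(n) ↑ ∞) ≤ M`: the symmetric condition in the second variable. -/
def BVSharpV2 (p : ℕ → ℝ) (f : ℝ → ℝ → ℝ) (M : ℝ) : Prop :=
  ∀ (n m : ℕ) (a b x : ℕ → ℝ), Nonoverlap m a b →
    (∀ i < m, 1 / 2 ^ n ≤ b i - a i) →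
    (∀ i < m, x i ∈ Set.Icc (0:ℝ) 1) →
    (∑ i ∈ Finset.range m, |f (x i) (b i) - f (x i) (a i)| ^ p n) ^ (1 / p n) ≤ M

/-- The class `BV^{#}(p(n) ↑ ∞)`. -/
def BVSharp (p : ℕ → ℝ) (f : ℝ → ℝ → ℝ) : Prop :=
  ∃ M : ℝ, BVSharpV1 p f M ∧ BVSharpV2 p f M

/-!
Sort the increments `|f(I_i, y_i)|` of an admissible family decreasingly, `e₀ ≥ e₁ ≥ ⋯`; since
the intervals have length at least `2⁻ⁿ`, there are at most `2ⁿ` of them. With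
`Λ(t) = ∑_{j<t} 1/λ_j`, the `Λ`-variation bound `M` gives `e_k Λ(k+1) ≤ M`, and the hypothesis
`t^{1/q} ≤ C Λ(t)` turns this into `e_k^{q-1} ≤ (MC)^{q-1} (k+1)^{1/q-1}`. The partial sums of
these weights are at most `q (MC)^{q-1} t^{1/q} ≤ q (MC)^{q-1} C Λ(t)`, so Abel summation against
the decreasing `e_k` gives `∑ e_k^q ≤ q (MC)^{q-1} C ∑ e_k/λ_k ≤ q (MC)^q`. Finally
`q^{1/q} ≤ 2`. The second variable is the first one for `Function.swap f`.
-/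

open Finset Real MeasureTheory

theorem Nonoverlap.comp {m : ℕ} {a b : ℕ → ℝ} (h : Nonoverlap m a b) {σ : ℕ → ℕ}
    (hinj : σ.Injective) (hσ : ∀ i < m, σ i < m) : Nonoverlap m (a ∘ σ) (b ∘ σ) :=
  ⟨fun i hi => h.1 (σ i) (hσ i hi),
    fun i hi j hj hij => h.2 (σ i) (hσ i hi) (σ j) (hσ j hj) (hinj.ne hij)⟩

theorem Nonoverlap.card_mul_le {m : ℕ} {a b : ℕ → ℝ} {δ : ℝ} (h : Nonoverlap m a b)
    (hδ : ∀ i < m, δ ≤ b i - a i) : m * δ ≤ 1 := by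
  have hdisj : (↑(range m) : Set ℕ).PairwiseDisjoint fun i => Set.Ioo (a i) (b i) :=
    fun i hi j hj hij => Set.disjoint_iff_inter_eq_empty.2
      (h.2 i (mem_range.1 hi) j (mem_range.1 hj) hij)
  have hsub : (⋃ i ∈ range m, Set.Ioo (a i) (b i)) ⊆ Set.Icc 0 1 := by
    simp only [Set.iUnion_subset_iff, mem_range]
    intro i hi x hx
    exact ⟨(h.1 i hi).1.trans hx.1.le, hx.2.le.trans (h.1 i hi).2.2⟩
  calc m * δ = ∑ i ∈ range m, δ := by simp
    _ ≤ ∑ i ∈ range m, volume.real (Set.Ioo (a i) (b i)) := by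
      refine sum_le_sum fun i hi => ?_
      rw [Real.volume_real_Ioo_of_le (h.1 i (mem_range.1 hi)).2.1.le]
      exact hδ i (mem_range.1 hi)
    _ = volume.real (⋃ i ∈ range m, Set.Ioo (a i) (b i)) :=
      (measureReal_biUnion_finset hdisj (fun _ _ => measurableSet_Ioo)
        fun _ _ => by simp).symm
    _ ≤ volume.real (Set.Icc (0 : ℝ) 1) := measureReal_mono hsub (by simp)
    _ = 1 := by simp

theorem exists_perm_antitoneOn_comp {α : Type*} [LinearOrder α] (d : ℕ → α) (m : ℕ) :
    ∃ σ : Equiv.Perm ℕ, (∀ i < m, σ i < m) ∧ (∀ i, m ≤ i → σ i = i) ∧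
      AntitoneOn (d ∘ σ) (Set.Iio m) := by
  let τ := Tuple.sort fun i : Fin m => OrderDual.toDual (d i)
  have hτ (i : ℕ) (hi : i < m) : τ.extendDomain Fin.equivSubtype i = τ ⟨i, hi⟩ :=
    Equiv.Perm.extendDomain_apply_subtype (b := i) _ _ hi
  refine ⟨τ.extendDomain Fin.equivSubtype, fun i hi => ?_, fun i hi => ?_, fun i hi j hj hij => ?_⟩
  · rw [hτ i hi]
    exact (τ _).isLt
  · exact Equiv.Perm.extendDomain_apply_not_subtype _ _ (not_lt.2 hi)
  · simp only [Function.comp_apply, hτ i hi, hτ j hj]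
    exact Tuple.monotone_sort (fun k : Fin m => OrderDual.toDual (d k))
      (show (⟨i, hi⟩ : Fin m) ≤ ⟨j, hj⟩ from hij)

theorem sum_mul_le_sum_mul_of_antitoneOn {e w v : ℕ → ℝ} {m : ℕ}
    (he : AntitoneOn e (Set.Iio m)) (he0 : ∀ k < m, 0 ≤ e k)
    (hwv : ∀ t ≤ m, ∑ k ∈ range t, w k ≤ ∑ k ∈ range t, v k) :
    ∑ k ∈ range m, e k * w k ≤ ∑ k ∈ range m, e k * v k := by
  rcases m.eq_zero_or_pos with rfl | hm
  · simp
  have hU : ∀ t ≤ m, 0 ≤ ∑ k ∈ range t, (v k - w k) := fun t ht => by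
    rw [sum_sub_distrib]
    linarith [hwv t ht]
  have hparts := sum_range_by_parts e (fun k => v k - w k) m
  simp only [smul_eq_mul] at hparts
  have hlast : 0 ≤ e (m - 1) * ∑ k ∈ range m, (v k - w k) :=
    mul_nonneg (he0 _ (by omega)) (hU m le_rfl)
  have hsteps : ∑ i ∈ range (m - 1), (e (i + 1) - e i) * ∑ k ∈ range (i + 1), (v k - w k) ≤ 0 :=
    sum_nonpos fun i hi => by
      have hi : i + 1 < m := by rw [mem_range] at hi; omega
      refine mul_nonpos_of_nonpos_of_nonneg ?_ (hU _ hi.le)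
      exact sub_nonpos.2 (he (show i < m by omega) hi (Nat.le_succ i))
  rw [← sub_nonneg, ← sum_sub_distrib]
  simp only [← mul_sub]
  linarith

theorem mul_sum_one_div_le_sum_div {e lam : ℕ → ℝ} {m k : ℕ} (hlam : ∀ j, 0 < lam j)
    (he : AntitoneOn e (Set.Iio m)) (he0 : ∀ k < m, 0 ≤ e k) (hk : k < m) :
    e k * ∑ j ∈ range (k + 1), 1 / lam j ≤ ∑ j ∈ range m, e j / lam j :=
  calc e k * ∑ j ∈ range (k + 1), 1 / lam j = ∑ j ∈ range (k + 1), e k / lam j := by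
        rw [mul_sum]
        simp only [mul_one_div]
    _ ≤ ∑ j ∈ range (k + 1), e j / lam j := sum_le_sum fun j hj => by
        have hj : j ≤ k := Nat.lt_succ_iff.1 (mem_range.1 hj)
        exact div_le_div_of_nonneg_right (he (hj.trans_lt hk) hk hj) (hlam j).le
    _ ≤ ∑ j ∈ range m, e j / lam j :=
      sum_le_sum_of_subset_of_nonneg (range_subset_range.2 hk) fun j hj _ =>
        div_nonneg (he0 j (mem_range.1 hj)) (hlam j).le

theorem mul_rpow_sub_one_le_rpow_sub_rpow {α t : ℝ} (hα0 : 0 ≤ α) (hα1 : α ≤ 1) (ht : 0 ≤ t) :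
    α * (t + 1) ^ (α - 1) ≤ (t + 1) ^ α - t ^ α := by
  have ht1 : 0 < t + 1 := by linarith
  have hamgm : t ^ α * (t + 1) ^ (1 - α) ≤ t + 1 - α := by
    have := geom_mean_le_arith_mean2_weighted hα0 (sub_nonneg.2 hα1) ht ht1.le (by ring)
    linarith
  have hcancel : (t + 1) ^ (1 - α) * (t + 1) ^ (α - 1) = 1 := by
    rw [← rpow_add ht1]
    simp
  have hmul : (t + 1) * (t + 1) ^ (α - 1) = (t + 1) ^ α := by
    rw [rpow_sub_one ht1.ne', mul_div_cancel₀ _ ht1.ne']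
  have := mul_le_mul_of_nonneg_right hamgm (rpow_nonneg ht1.le (α - 1))
  rw [mul_assoc, hcancel, mul_one, sub_mul, hmul] at this
  linarith

theorem sum_range_add_one_rpow_le {α : ℝ} (hα0 : 0 < α) (hα1 : α ≤ 1) (t : ℕ) :
    ∑ k ∈ range t, ((k : ℝ) + 1) ^ (α - 1) ≤ (t : ℝ) ^ α / α :=
  calc ∑ k ∈ range t, ((k : ℝ) + 1) ^ (α - 1)
      ≤ ∑ k ∈ range t, ((((k + 1 : ℕ) : ℝ) ^ α - ((k : ℕ) : ℝ) ^ α) / α) :=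
        sum_le_sum fun k _ => by
          rw [le_div_iff₀ hα0, mul_comm]
          push_cast
          exact mul_rpow_sub_one_le_rpow_sub_rpow hα0.le hα1 k.cast_nonneg
    _ = (t : ℝ) ^ α / α := by
      rw [← sum_div, sum_range_sub (fun k : ℕ => (k : ℝ) ^ α)]
      simp [zero_rpow hα0.ne']

theorem rpow_sub_one_le_of_mul_rpow_le {x s K q : ℝ} (hx : 0 ≤ x) (hs : 0 < s) (hq : 1 ≤ q)
    (h : x * s ^ (1 / q) ≤ K) : x ^ (q - 1) ≤ K ^ (q - 1) * s ^ (1 / q - 1) := by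
  have hpow := rpow_le_rpow (by positivity) h (sub_nonneg.2 hq)
  have hexp : 1 / q * (q - 1) = -(1 / q - 1) := by field_simp; ring
  rwa [mul_rpow hx (by positivity), ← rpow_mul hs.le, hexp, rpow_neg hs.le, ← div_eq_mul_inv,
    div_le_iff₀ (by positivity)] at hpow

theorem rpow_one_div_self_le_two {q : ℝ} (hq : 1 ≤ q) : q ^ (1 / q) ≤ 2 := by
  have hq0 : 0 < q := by linarith
  have hbernoulli : q ≤ 2 ^ q := by
    have := one_add_mul_self_le_rpow_one_add (s := 1) (by norm_num) hq
    norm_num at this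
    linarith
  calc q ^ (1 / q) ≤ (2 ^ q) ^ (1 / q) := rpow_le_rpow hq0.le hbernoulli (by positivity)
    _ = 2 := by rw [← rpow_mul zero_le_two, mul_one_div_cancel hq0.ne', rpow_one]

theorem rpow_le_mul_of_antitoneOn {lam e : ℕ → ℝ} {m k : ℕ} {q M C : ℝ}
    (hlam : ∀ j, 0 < lam j) (hq : 1 ≤ q) (hC0 : 0 ≤ C)
    (he : AntitoneOn e (Set.Iio m)) (he0 : ∀ k < m, 0 ≤ e k)
    (hM : ∑ k ∈ range m, e k / lam k ≤ M)
    (hC : ((k : ℝ) + 1) ^ (1 / q) ≤ C * ∑ j ∈ range (k + 1), 1 / lam j) (hk : k < m) :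
    e k ^ q ≤ e k * ((M * C) ^ (q - 1) * ((k : ℝ) + 1) ^ (1 / q - 1)) := by
  have hdom : e k * ((k : ℝ) + 1) ^ (1 / q) ≤ M * C :=
    calc e k * ((k : ℝ) + 1) ^ (1 / q)
        ≤ e k * (C * ∑ j ∈ range (k + 1), 1 / lam j) := mul_le_mul_of_nonneg_left hC (he0 k hk)
      _ = C * (e k * ∑ j ∈ range (k + 1), 1 / lam j) := by ring
      _ ≤ C * M := mul_le_mul_of_nonneg_left
          ((mul_sum_one_div_le_sum_div hlam he he0 hk).trans hM) hC0
      _ = M * C := mul_comm C M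
  calc e k ^ q = e k * e k ^ (q - 1) := by
        rw [← rpow_one_add' (he0 k hk) (by linarith)]
        ring_nf
    _ ≤ e k * ((M * C) ^ (q - 1) * ((k : ℝ) + 1) ^ (1 / q - 1)) := mul_le_mul_of_nonneg_left
        (rpow_sub_one_le_of_mul_rpow_le (he0 k hk) (by positivity) hq hdom) (he0 k hk)

theorem rpow_sum_rpow_le_of_antitoneOn {lam e : ℕ → ℝ} {m : ℕ} {q M C : ℝ}
    (hlam : ∀ j, 0 < lam j) (hq : 1 ≤ q) (hC0 : 0 ≤ C)
    (he : AntitoneOn e (Set.Iio m)) (he0 : ∀ k < m, 0 ≤ e k)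
    (hM : ∑ k ∈ range m, e k / lam k ≤ M)
    (hC : ∀ t : ℕ, 1 ≤ t → t ≤ m → (t : ℝ) ^ (1 / q) ≤ C * ∑ j ∈ range t, 1 / lam j) :
    (∑ k ∈ range m, e k ^ q) ^ (1 / q) ≤ 2 * (M * C) := by
  have hM0 : 0 ≤ M :=
    (sum_nonneg fun k hk => div_nonneg (he0 k (mem_range.1 hk)) (hlam k).le).trans hM
  set K := M * C with hKdef
  have hK : 0 ≤ K := mul_nonneg hM0 hC0
  have hq0 : 0 < q := by linarith
  set w : ℕ → ℝ := fun k => K ^ (q - 1) * ((k : ℝ) + 1) ^ (1 / q - 1)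
  have hpow : ∀ k ∈ range m, e k ^ q ≤ e k * w k := fun k hk =>
    rpow_le_mul_of_antitoneOn hlam hq hC0 he he0 hM
      (by exact_mod_cast hC (k + 1) (by omega) (mem_range.1 hk)) (mem_range.1 hk)
  have hprefix : ∀ t ≤ m,
      ∑ k ∈ range t, w k ≤ ∑ k ∈ range t, q * K ^ (q - 1) * C * (1 / lam k) := by
    intro t ht
    rcases t.eq_zero_or_pos with rfl | ht0
    · simp
    calc ∑ k ∈ range t, w k = K ^ (q - 1) * ∑ k ∈ range t, ((k : ℝ) + 1) ^ (1 / q - 1) := by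
          rw [mul_sum]
      _ ≤ K ^ (q - 1) * (q * (t : ℝ) ^ (1 / q)) := by
          gcongr
          simpa [mul_comm] using sum_range_add_one_rpow_le (α := 1 / q) (by positivity)
            ((div_le_one hq0).2 hq) t
      _ ≤ K ^ (q - 1) * (q * (C * ∑ j ∈ range t, 1 / lam j)) := by
          gcongr
          exact hC t ht0 ht
      _ = ∑ k ∈ range t, q * K ^ (q - 1) * C * (1 / lam k) := by
          simp only [mul_sum]
          exact sum_congr rfl fun k _ => by ring
  have hsum : ∑ k ∈ range m, e k ^ q ≤ q * K ^ q :=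
    calc ∑ k ∈ range m, e k ^ q ≤ ∑ k ∈ range m, e k * w k := sum_le_sum hpow
      _ ≤ ∑ k ∈ range m, e k * (q * K ^ (q - 1) * C * (1 / lam k)) :=
          sum_mul_le_sum_mul_of_antitoneOn he he0 hprefix
      _ = q * K ^ (q - 1) * C * ∑ k ∈ range m, e k / lam k := by
          rw [mul_sum]
          exact sum_congr rfl fun k _ => by ring
      _ ≤ q * K ^ (q - 1) * C * M := by gcongr
      _ = q * K ^ q := by
          rw [mul_assoc _ C, mul_comm C M, ← hKdef, mul_assoc,
            ← rpow_add_one' hK (by linarith), sub_add_cancel]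
  calc (∑ k ∈ range m, e k ^ q) ^ (1 / q) ≤ (q * K ^ q) ^ (1 / q) :=
        rpow_le_rpow (sum_nonneg fun k hk => rpow_nonneg (he0 k (mem_range.1 hk)) q) hsum
          (by positivity)
    _ = q ^ (1 / q) * K := by
        rw [mul_rpow hq0.le (rpow_nonneg hK q), ← rpow_mul hK, mul_one_div_cancel hq0.ne',
          rpow_one]
    _ ≤ 2 * K := mul_le_mul_of_nonneg_right (rpow_one_div_self_le_two hq) hK

theorem LamSharpV1.bvSharpV1 {lam p : ℕ → ℝ} {f : ℝ → ℝ → ℝ} {M C : ℝ}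
    (hlam : ∀ j, 0 < lam j) (hp : ∀ n, 1 ≤ p n)
    (hC : ∀ n m : ℕ, 1 ≤ m → m ≤ 2 ^ n →
      (m : ℝ) ^ (1 / p n) / ∑ j ∈ range m, 1 / lam j ≤ C)
    (hf : LamSharpV1 lam f M) : BVSharpV1 p f (2 * (M * C)) := by
  intro n m a b y hab hlen hy
  have hC0 : 0 ≤ C := (hlam 0).le.trans (by simpa using hC 0 1 le_rfl le_rfl)
  have hm : m ≤ 2 ^ n := by
    have := hab.card_mul_le hlen
    rw [mul_one_div, div_le_one (by positivity)] at this
    exact_mod_cast this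
  obtain ⟨σ, hσm, hσ, hanti⟩ :=
    exists_perm_antitoneOn_comp (fun i => |f (b i) (y i) - f (a i) (y i)|) m
  rw [← Equiv.Perm.sum_comp σ (range m) (fun i => |f (b i) (y i) - f (a i) (y i)| ^ p n)
    fun i hi => mem_range.2 (not_le.1 fun h => hi (hσ i h))]
  refine rpow_sum_rpow_le_of_antitoneOn hlam (hp n) hC0 hanti (fun k _ => abs_nonneg _)
    (hf m (a ∘ σ) (b ∘ σ) (y ∘ σ) (hab.comp σ.injective hσm) fun i hi => hy _ (hσm i hi))
    fun t ht htm => ?_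
  rw [← div_le_iff₀
    (sum_pos (fun j _ => one_div_pos.2 (hlam j)) (nonempty_range_iff.2 (by omega)))]
  exact hC n t ht (htm.trans hm)

theorem lamSharpBV_subset_bvSharp_general
    (lam : ℕ → ℝ) (hmono : Monotone lam) (hlam1 : 1 < lam 0)
    (p : ℕ → ℝ) (hp1 : ∀ n, 1 ≤ p n)
    (hbdd : ∃ C : ℝ, ∀ n m : ℕ, 1 ≤ m → m ≤ 2 ^ n →
      (m : ℝ) ^ (1 / p n) / ∑ j ∈ Finset.range m, 1 / lam j ≤ C)
    (f : ℝ → ℝ → ℝ) (hf : LamSharpBV lam f) :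
    BVSharp p f := by
  obtain ⟨C, hC⟩ := hbdd
  obtain ⟨M, hM₁, hM₂⟩ := hf
  have hlam : ∀ j, 0 < lam j := fun j => by linarith [hmono (Nat.zero_le j)]
  exact ⟨2 * (M * C), hM₁.bvSharpV1 hlam hp1 hC,
    LamSharpV1.bvSharpV1 (f := Function.swap f) hlam hp1 hC hM₂⟩

/-- Theorem 1, sufficiency: if
`sup_n sup_{1 ≤ m ≤ 2^n} m^{1/p(n)} / ∑_{j=1}^m 1/λ_j < ∞`, then
`Λ^{#}BV ⊆ BV^{#}(p(n) ↑ ∞)`. -/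
theorem lamSharpBV_subset_bvSharp
    (lam : ℕ → ℝ) (hmono : Monotone lam) (hlam1 : 1 < lam 0)
    (p : ℕ → ℝ) (hp1 : ∀ n, 1 ≤ p n) (hpmono : Monotone p)
    (hptop : Filter.Tendsto p Filter.atTop Filter.atTop)
    (hbdd : ∃ C : ℝ, ∀ n m : ℕ, 1 ≤ m → m ≤ 2 ^ n →
      (m : ℝ) ^ (1 / p n) / ∑ j ∈ Finset.range m, 1 / lam j ≤ C)
    (f : ℝ → ℝ → ℝ) (hf : LamSharpBV lam f) :
    BVSharp p f :=
  lamSharpBV_subset_bvSharp_general lam hmono hlam1 p hp1 hbdd f hf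
end

section
/- Let $\Lambda = \{\lambda_n\}$ be a nondecreasing sequence of positive reals with $\lambda_1 > 1$ and $\sum_n 1/\lambda_n = \infty$, and let $p(n) \uparrow \infty$. If $\limsup_{n\to\infty} \sup_{1 \leq m \leq 2^n} \frac{m^{1/p(n)}}{\sum_{j=1}^m (1/\lambda_j)} = \infty$, then there exists a function $f : \mathbb{R}^2 \to \mathbb{R}$, 1-periodic in each variable, such that $f \in \Lambda^{\#}BV$ but $f \notin BV^{\#}(p(n) \uparrow \infty)$. -/
/-!
Put a step function of height `H k` on the horizontal line `y = 1/(k+2)`, supported on the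
`⌊m_k/2⌋` odd grid points `(2j+1)/m_k`, with `m_k ≤ 2^{n_k}` chosen so that
`m_k^{1/p(n_k)} / ∑_{j<m_k} 1/λ_j` is huge and `H k = 2^{-k} / ∑_{j<m_k} 1/λ_j`.
In a Waterman sum the endpoints of nonoverlapping intervals are distinct, so on line `k` at most
`m_k` of them meet the support, and since `1/λ` is decreasing their weights sum to at most
`∑_{j<m_k} 1/λ_j`; hence line `k` contributes at most `2^{-k}` and `f ∈ Λ^{#}BV`. In the second
variable each line is hit by at most one endpoint and contributes at most `H k / λ_0 ≤ 2^{-k}`.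
On the other hand, the intervals `(2j/m_k, (2j+1)/m_k)` on line `k` have length `≥ 2^{-n_k}` and
give an `ℓ^{p(n_k)}` sum of at least `m_k^{1/p(n_k)} H k / 4`, which is unbounded in `k`.
-/

open Finset

theorem Antitone.sum_le_sum_range_card {M : Type*} [AddCommMonoid M] [PartialOrder M]
    [IsOrderedAddMonoid M] {c : ℕ → M} (hc : Antitone c) (T : Finset ℕ) :
    ∑ i ∈ T, c i ≤ ∑ j ∈ range #T, c j := by
  classical
  induction T using Finset.induction_on_max with
  | empty => simp
  | insert a s hlt ih =>
    have ha : a ∉ s := fun h => (hlt a h).false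
    have hcard : #s ≤ a := by
      simpa using card_le_card (fun x hx => mem_range.2 (hlt x hx) : s ⊆ range a)
    rw [sum_insert ha, card_insert_of_notMem ha, sum_range_succ, add_comm]
    exact add_le_add ih (hc hcard)

theorem sum_half_pow_le_two (T : Finset ℕ) : ∑ k ∈ T, (1 / 2 : ℝ) ^ k ≤ 2 :=
  (summable_geometric_two.sum_le_tsum T fun _ _ => by positivity).trans_eq tsum_geometric_two

theorem sum_mul_le_two_of_card_fiber_le {w c : ℕ → ℝ} {N : ℕ → ℕ} (hw : Antitone w)
    (hw0 : ∀ j, 0 ≤ w j) (hc : ∀ k, 0 ≤ c k)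
    (hcN : ∀ k, c k * ∑ j ∈ range (N k), w j ≤ (1 / 2) ^ k)
    {T : Finset ℕ} {κ : ℕ → ℕ} (hfib : ∀ k, #{i ∈ T | κ i = k} ≤ N k) :
    ∑ i ∈ T, c (κ i) * w i ≤ 2 := by
  calc ∑ i ∈ T, c (κ i) * w i
      = ∑ k ∈ T.image κ, ∑ i ∈ T with κ i = k, c (κ i) * w i :=
        (sum_fiberwise_of_maps_to (fun i hi => mem_image_of_mem κ hi) _).symm
    _ ≤ ∑ k ∈ T.image κ, (1 / 2 : ℝ) ^ k := sum_le_sum fun k _ => ?_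
    _ ≤ 2 := sum_half_pow_le_two _
  calc ∑ i ∈ T with κ i = k, c (κ i) * w i
      = c k * ∑ i ∈ T with κ i = k, w i := by
        rw [mul_sum]
        exact sum_congr rfl fun i hi => by rw [(mem_filter.1 hi).2]
    _ ≤ c k * ∑ j ∈ range (N k), w j := by
        gcongr ?_ * ?_
        · exact hc k
        calc _ ≤ ∑ j ∈ range #{i ∈ T | κ i = k}, w j := hw.sum_le_sum_range_card _
          _ ≤ _ := sum_le_sum_of_subset_of_nonneg (range_subset_range.2 (hfib k))
                fun j _ _ => hw0 j
    _ ≤ _ := hcN k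

theorem eq_of_fract_eq_of_abs_sub_lt_one {x y : ℝ} (h : Int.fract x = Int.fract y)
    (hxy : |x - y| < 1) : x = y := by
  obtain ⟨z, hz⟩ := Int.fract_eq_fract.1 h
  rw [hz] at hxy
  have : z = 0 := Int.abs_lt_one_iff.1 (by exact_mod_cast hxy)
  simpa [this, sub_eq_zero] using hz

theorem sum_abs_sub_div_le {lam : ℕ → ℝ} (hlam : ∀ i, 0 ≤ lam i) (F G : ℕ → ℝ) (s : Finset ℕ) :
    ∑ i ∈ s, |F i - G i| / lam i ≤ ∑ i ∈ s, |F i| / lam i + ∑ i ∈ s, |G i| / lam i := by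
  rw [← sum_add_distrib]
  exact sum_le_sum fun i _ => by
    rw [← add_div]; exact div_le_div_of_nonneg_right (abs_sub _ _) (hlam i)

namespace Nonoverlap

variable {m : ℕ} {a b : ℕ → ℝ} {i j : ℕ}

theorem of_le_of_sorted (hab : ∀ i < m, 0 ≤ a i ∧ a i < b i ∧ b i ≤ 1)
    (hsorted : ∀ i j, i < j → b i ≤ a j) : Nonoverlap m a b := by
  refine ⟨hab, fun i _ j _ hij => ?_⟩
  rw [Set.Ioo_inter_Ioo, Set.Ioo_eq_empty_iff, not_lt]
  rcases hij.lt_or_gt with h | h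
  · exact (min_le_left _ _).trans ((hsorted i j h).trans (le_max_right _ _))
  · exact (min_le_right _ _).trans ((hsorted j i h).trans (le_max_left _ _))

theorem eq_of_left_eq (h : Nonoverlap m a b) (hi : i < m) (hj : j < m) (he : a i = a j) :
    i = j := by
  by_contra hij
  have := h.2 i hi j hj hij
  rw [Set.Ioo_inter_Ioo, Set.Ioo_eq_empty_iff, he, max_self] at this
  exact this (lt_min (he ▸ (h.1 i hi).2.1) (h.1 j hj).2.1)

theorem eq_of_right_eq (h : Nonoverlap m a b) (hi : i < m) (hj : j < m) (he : b i = b j) :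
    i = j := by
  by_contra hij
  have := h.2 i hi j hj hij
  rw [Set.Ioo_inter_Ioo, Set.Ioo_eq_empty_iff, he, min_self] at this
  exact this (max_lt (he ▸ (h.1 i hi).2.1) (h.1 j hj).2.1)

theorem injOn_fract_left (h : Nonoverlap m a b) :
    Set.InjOn (fun i => Int.fract (a i)) (range m : Set ℕ) := by
  intro i hi j hj he
  simp only [coe_range, Set.mem_Iio] at hi hj
  obtain ⟨hai, hbi, hbi1⟩ := h.1 i hi
  obtain ⟨haj, hbj, hbj1⟩ := h.1 j hj
  exact h.eq_of_left_eq hi hj <| eq_of_fract_eq_of_abs_sub_lt_one he <|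
    abs_sub_lt_iff.2 ⟨by linarith, by linarith⟩

theorem injOn_fract_right (h : Nonoverlap m a b) :
    Set.InjOn (fun i => Int.fract (b i)) (range m : Set ℕ) := by
  intro i hi j hj he
  simp only [coe_range, Set.mem_Iio] at hi hj
  obtain ⟨hai, hbi, hbi1⟩ := h.1 i hi
  obtain ⟨haj, hbj, hbj1⟩ := h.1 j hj
  exact h.eq_of_right_eq hi hj <| eq_of_fract_eq_of_abs_sub_lt_one he <|
    abs_sub_lt_iff.2 ⟨by linarith, by linarith⟩

end Nonoverlap

-- For injective `ℓ` at most one term is nonzero: `H k` where `fract y = ℓ k` and `fract x ∈ S k`.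
noncomputable def lineStep (ℓ : ℕ → ℝ) (S : ℕ → Finset ℝ) (H : ℕ → ℝ) (x y : ℝ) : ℝ :=
  ∑' k, if Int.fract y = ℓ k ∧ Int.fract x ∈ S k then H k else 0

namespace lineStep

variable {ℓ : ℕ → ℝ} {S : ℕ → Finset ℝ} {H : ℕ → ℝ}

theorem add_one_left (x y : ℝ) : lineStep ℓ S H (x + 1) y = lineStep ℓ S H x y := by
  simp only [lineStep, Int.fract_add_one]

theorem add_one_right (x y : ℝ) : lineStep ℓ S H x (y + 1) = lineStep ℓ S H x y := by
  simp only [lineStep, Int.fract_add_one]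

theorem eq_of_fract_eq (hℓ : ℓ.Injective) {x y : ℝ} {k : ℕ} (hy : Int.fract y = ℓ k) :
    lineStep ℓ S H x y = if Int.fract x ∈ S k then H k else 0 := by
  rw [lineStep, tsum_eq_single k fun k' hk' => if_neg fun h => hk' (hℓ (h.1.symm.trans hy)),
    if_congr (and_iff_right hy) rfl rfl]

theorem exists_of_ne_zero (hℓ : ℓ.Injective) {x y : ℝ} (h : lineStep ℓ S H x y ≠ 0) :
    ∃ k, Int.fract y = ℓ k ∧ Int.fract x ∈ S k ∧ lineStep ℓ S H x y = H k := by
  by_cases hy : ∃ k, Int.fract y = ℓ k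
  · obtain ⟨k, hk⟩ := hy
    rw [eq_of_fract_eq hℓ hk] at h ⊢
    by_cases hx : Int.fract x ∈ S k
    · exact ⟨k, hk, hx, if_pos hx⟩
    · exact absurd (if_neg hx) h
  · simp [lineStep, not_exists.1 hy] at h

end lineStep

section Waterman

variable {lam : ℕ → ℝ} (hmono : Monotone lam) (hpos : 0 < lam 0)
  {ℓ : ℕ → ℝ} (hℓ : ℓ.Injective) {S : ℕ → Finset ℝ} {H : ℕ → ℝ} {N : ℕ → ℕ}
  (hH : ∀ k, 0 ≤ H k) (hHN : ∀ k, H k * ∑ j ∈ range (N k), 1 / lam j ≤ (1 / 2) ^ k)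
include hmono hpos hℓ hH hHN

theorem sum_abs_lineStep_div_le_two {m : ℕ} {u v : ℕ → ℝ}
    (hcard : ∀ k, #{i ∈ range m | Int.fract (v i) = ℓ k ∧ Int.fract (u i) ∈ S k} ≤ N k) :
    ∑ i ∈ range m, |lineStep ℓ S H (u i) (v i)| / lam i ≤ 2 := by
  have hlam : ∀ j, 0 < lam j := fun j => hpos.trans_le (hmono j.zero_le)
  set T := {i ∈ range m | lineStep ℓ S H (u i) (v i) ≠ 0}
  choose! κ hκ using fun i (hi : i ∈ T) => lineStep.exists_of_ne_zero hℓ (mem_filter.1 hi).2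
  calc ∑ i ∈ range m, |lineStep ℓ S H (u i) (v i)| / lam i
      = ∑ i ∈ T, |lineStep ℓ S H (u i) (v i)| / lam i :=
        (sum_filter_of_ne (p := fun i => lineStep ℓ S H (u i) (v i) ≠ 0)
          fun i _ h hi => h (by rw [hi, abs_zero, zero_div])).symm
    _ = ∑ i ∈ T, H (κ i) * (1 / lam i) :=
        sum_congr rfl fun i hi => by rw [(hκ i hi).2.2, abs_of_nonneg (hH _), mul_one_div]
    _ ≤ 2 := by
      refine sum_mul_le_two_of_card_fiber_le (fun i j hij => ?_)
        (fun j => (one_div_pos.2 (hlam j)).le) hH hHN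
        fun k => (card_le_card fun i hi => ?_).trans (hcard k)
      · exact one_div_le_one_div_of_le (hlam i) (hmono hij)
      · obtain ⟨hiT, rfl⟩ := mem_filter.1 hi
        exact mem_filter.2 ⟨(mem_filter.1 hiT).1, (hκ i hiT).1, (hκ i hiT).2.1⟩

theorem lamSharpV1_lineStep (hS : ∀ k, #(S k) ≤ N k) : LamSharpV1 lam (lineStep ℓ S H) 4 := by
  intro m a b y hab _
  have hcard {e : ℕ → ℝ} (he : Set.InjOn (fun i => Int.fract (e i)) (range m : Set ℕ)) (k : ℕ) :
      #{i ∈ range m | Int.fract (y i) = ℓ k ∧ Int.fract (e i) ∈ S k} ≤ N k :=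
    (card_le_card_of_injOn (fun i => Int.fract (e i)) (fun i hi => (mem_filter.1 hi).2.2)
      (he.mono fun i hi => (mem_filter.1 hi).1)).trans (hS k)
  calc _ ≤ _ := sum_abs_sub_div_le (fun i => (hpos.trans_le (hmono i.zero_le)).le) _ _ _
    _ ≤ 2 + 2 := add_le_add
        (sum_abs_lineStep_div_le_two hmono hpos hℓ hH hHN (hcard hab.injOn_fract_right))
        (sum_abs_lineStep_div_le_two hmono hpos hℓ hH hHN (hcard hab.injOn_fract_left))
    _ = 4 := by norm_num

theorem lamSharpV2_lineStep (hN : ∀ k, 1 ≤ N k) : LamSharpV2 lam (lineStep ℓ S H) 4 := by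
  intro m a b x hab _
  have hcard {e : ℕ → ℝ} (he : Set.InjOn (fun i => Int.fract (e i)) (range m : Set ℕ)) (k : ℕ) :
      #{i ∈ range m | Int.fract (e i) = ℓ k ∧ Int.fract (x i) ∈ S k} ≤ N k := by
    refine (card_le_one.2 fun i hi j hj => ?_).trans (hN k)
    rw [mem_filter] at hi hj
    exact he hi.1 hj.1 (hi.2.1.trans hj.2.1.symm)
  calc _ ≤ _ := sum_abs_sub_div_le (fun i => (hpos.trans_le (hmono i.zero_le)).le) _ _ _
    _ ≤ 2 + 2 := add_le_add
        (sum_abs_lineStep_div_le_two hmono hpos hℓ hH hHN (hcard hab.injOn_fract_right))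
        (sum_abs_lineStep_div_le_two hmono hpos hℓ hH hHN (hcard hab.injOn_fract_left))
    _ = 4 := by norm_num

theorem lamSharpBV_lineStep (hS : ∀ k, #(S k) ≤ N k) (hN : ∀ k, 1 ≤ N k) :
    LamSharpBV lam (lineStep ℓ S H) :=
  ⟨4, lamSharpV1_lineStep hmono hpos hℓ hH hHN hS, lamSharpV2_lineStep hmono hpos hℓ hH hHN hN⟩

end Waterman

noncomputable def oddGrid (m : ℕ) : Finset ℝ :=
  (range (m / 2)).image fun j : ℕ => (2 * j + 1 : ℝ) / m

theorem card_oddGrid_le (m : ℕ) : #(oddGrid m) ≤ m :=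
  card_image_le.trans ((card_range _).trans_le (Nat.div_le_self m 2))

theorem natCast_two_mul_add_two_le {m i : ℕ} (hi : i < m / 2) : (2 * i + 2 : ℝ) ≤ m := by
  exact_mod_cast (by omega : 2 * i + 2 ≤ m)

theorem nonoverlap_evenOdd (m : ℕ) :
    Nonoverlap (m / 2) (fun i => 2 * i / m) (fun i => (2 * i + 1) / m) := by
  refine .of_le_of_sorted (fun i hi => ?_) fun i j hij => ?_
  · have h := natCast_two_mul_add_two_le hi
    have hm : (0 : ℝ) < m := lt_of_lt_of_le (by positivity) h
    exact ⟨by positivity, div_lt_div_of_pos_right (by linarith) hm,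
      (div_le_one hm).2 (by linarith)⟩
  · exact div_le_div_of_nonneg_right (by exact_mod_cast (by omega : 2 * i + 1 ≤ 2 * j))
      (Nat.cast_nonneg _)

theorem rpow_mul_le_of_bvSharpV1_lineStep {ℓ : ℕ → ℝ} (hℓ : ℓ.Injective)
    (hℓ01 : ∀ k, ℓ k ∈ Set.Ico 0 1) {m : ℕ → ℕ} {H p : ℕ → ℝ} {M : ℝ}
    (hf : BVSharpV1 p (lineStep ℓ (fun k => oddGrid (m k)) H) M)
    {k n : ℕ} (hH : 0 ≤ H k) (hp : 0 < p n) (hmn : m k ≤ 2 ^ n) :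
    ((m k / 2 : ℕ) : ℝ) ^ (1 / p n) * H k ≤ M := by
  have hm {i : ℕ} (hi : i < m k / 2) : (0 : ℝ) < m k :=
    lt_of_lt_of_le (by positivity) (natCast_two_mul_add_two_le hi)
  have hfract {i c : ℕ} (hi : i < m k / 2) (hc : c ≤ 2 * i + 1) :
      Int.fract ((c : ℝ) / m k) = c / m k := by
    have : (c : ℝ) ≤ 2 * i + 1 := by exact_mod_cast hc
    refine Int.fract_eq_self.2 ⟨by positivity, (div_lt_one (hm hi)).2 ?_⟩
    linarith [natCast_two_mul_add_two_le hi]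
  have hline : Int.fract (ℓ k) = ℓ k := Int.fract_eq_self.2 (hℓ01 k)
  have hodd {i : ℕ} (hi : i < m k / 2) :
      lineStep ℓ (fun k => oddGrid (m k)) H ((2 * i + 1) / m k) (ℓ k) = H k := by
    rw [lineStep.eq_of_fract_eq hℓ hline, if_pos]
    rw [show (2 * i + 1 : ℝ) = (2 * i + 1 : ℕ) by push_cast; ring, hfract hi le_rfl]
    exact mem_image.2 ⟨i, mem_range.2 hi, by push_cast; ring⟩
  have heven {i : ℕ} (hi : i < m k / 2) :
      lineStep ℓ (fun k => oddGrid (m k)) H (2 * i / m k) (ℓ k) = 0 := by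
    rw [lineStep.eq_of_fract_eq hℓ hline, if_neg]
    rw [show (2 * i : ℝ) = (2 * i : ℕ) by push_cast; ring, hfract hi (by omega)]
    intro hmem
    obtain ⟨j, -, hj⟩ := mem_image.1 hmem
    rw [div_left_inj' (hm hi).ne'] at hj
    have : 2 * j + 1 = 2 * i := by exact_mod_cast hj
    omega
  have hlen : ∀ i < m k / 2, (1 : ℝ) / 2 ^ n ≤ (2 * i + 1) / m k - 2 * i / m k := fun i hi => by
    rw [← sub_div, add_sub_cancel_left]
    exact one_div_le_one_div_of_le (hm hi) (by exact_mod_cast hmn)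
  have := hf n (m k / 2) _ _ (fun _ => ℓ k) (nonoverlap_evenOdd (m k)) hlen
    fun _ _ => Set.Ico_subset_Icc_self (hℓ01 k)
  rwa [sum_congr rfl fun i hi => by rw [hodd (mem_range.1 hi), heven (mem_range.1 hi), sub_zero,
      abs_of_nonneg hH], sum_const, card_range, nsmul_eq_mul,
    Real.mul_rpow (Nat.cast_nonneg _) (Real.rpow_nonneg hH _), ← Real.rpow_mul hH,
    mul_one_div_cancel hp.ne', Real.rpow_one] at this

theorem natCast_rpow_le_four_mul_rpow_half {m : ℕ} (hm : 2 ≤ m) {r : ℝ} (hr0 : 0 ≤ r)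
    (hr1 : r ≤ 1) : (m : ℝ) ^ r ≤ 4 * ((m / 2 : ℕ) : ℝ) ^ r := by
  have hq : (m : ℝ) ≤ 4 * ((m / 2 : ℕ) : ℝ) := by exact_mod_cast (by omega : m ≤ 4 * (m / 2))
  have h4 : (4 : ℝ) ^ r ≤ 4 := by
    simpa using Real.rpow_le_rpow_of_exponent_le (by norm_num : (1 : ℝ) ≤ 4) hr1
  calc (m : ℝ) ^ r ≤ (4 * ((m / 2 : ℕ) : ℝ)) ^ r := by gcongr
    _ = 4 ^ r * ((m / 2 : ℕ) : ℝ) ^ r := Real.mul_rpow (by norm_num) (Nat.cast_nonneg _)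
    _ ≤ 4 * ((m / 2 : ℕ) : ℝ) ^ r := by gcongr

theorem two_le_of_lt_rpow_div_sum {lam : ℕ → ℝ} {m : ℕ} {r : ℝ} (hm : 1 ≤ m)
    (h : lam 0 < (m : ℝ) ^ r / ∑ j ∈ range m, 1 / lam j) : 2 ≤ m := by
  by_contra hm2
  obtain rfl : m = 1 := by omega
  simp at h

theorem exists_lamSharpBV_not_bvSharp_general
    (lam : ℕ → ℝ) (hmono : Monotone lam) (hlam1 : 1 < lam 0)
    (p : ℕ → ℝ) (hp1 : ∀ n, 1 ≤ p n)
    (hunbdd : ∀ C : ℝ, ∃ n m : ℕ, 1 ≤ m ∧ m ≤ 2 ^ n ∧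
      C < (m : ℝ) ^ (1 / p n) / ∑ j ∈ Finset.range m, 1 / lam j) :
    ∃ f : ℝ → ℝ → ℝ,
      (∀ x y : ℝ, f (x + 1) y = f x y ∧ f x (y + 1) = f x y) ∧
      LamSharpBV lam f ∧ ¬ BVSharp p f := by
  have hlam0 : 0 < lam 0 := one_pos.trans hlam1
  -- The factor `4` pays for `⌊m/2⌋ ≥ m/4`; exceeding `λ₀` rules out `m = 1`.
  choose n m hm1 hmn hratio using fun k : ℕ => hunbdd (4 * 2 ^ k * (k + lam 0))
  set L : ℕ → ℝ := fun k => ∑ j ∈ range (m k), 1 / lam j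
  have hL (k : ℕ) : 0 < L k := sum_pos (fun j _ => one_div_pos.2 (hlam0.trans_le (hmono j.zero_le)))
    (nonempty_range_iff.2 (by have := hm1 k; omega))
  set H : ℕ → ℝ := fun k => (1 / 2) ^ k / L k
  have hH (k : ℕ) : 0 ≤ H k := div_nonneg (by positivity) (hL k).le
  have hℓ : Function.Injective fun k : ℕ => (1 : ℝ) / (k + 2) := fun k k' h => by simpa using h
  have hℓ01 (k : ℕ) : (1 : ℝ) / (k + 2) ∈ Set.Ico 0 1 :=
    ⟨by positivity, (div_lt_one (by positivity)).2 (by linarith [(k.cast_nonneg : (0 : ℝ) ≤ k)])⟩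
  refine ⟨lineStep (fun k => 1 / (k + 2)) (fun k => oddGrid (m k)) H,
    fun x y => ⟨lineStep.add_one_left x y, lineStep.add_one_right x y⟩,
    lamSharpBV_lineStep hmono hlam0 hℓ hH (fun k => (div_mul_cancel₀ _ (hL k).ne').le)
      (fun k => card_oddGrid_le _) hm1, ?_⟩
  rintro ⟨M, hM, -⟩
  obtain ⟨k, hk⟩ := exists_nat_gt M
  have hp : 0 < p (n k) := one_pos.trans_le (hp1 _)
  have hC : lam 0 ≤ 4 * 2 ^ k * (k + lam 0) :=
    calc lam 0 ≤ k + lam 0 := le_add_of_nonneg_left k.cast_nonneg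
      _ ≤ 4 * 2 ^ k * (k + lam 0) := le_mul_of_one_le_left (by positivity)
          (one_le_mul_of_one_le_of_one_le (by norm_num) (one_le_pow₀ one_le_two))
  have hq := natCast_rpow_le_four_mul_rpow_half (two_le_of_lt_rpow_div_sum (hm1 k)
    (hC.trans_lt (hratio k))) (r := 1 / p (n k)) (by positivity) ((div_le_one hp).2 (hp1 _))
  have hbv := rpow_mul_le_of_bvSharpV1_lineStep hℓ hℓ01 hM (hH k) hp (hmn k)
  have hlarge : 4 * (k + lam 0) < (m k : ℝ) ^ (1 / p (n k)) * H k :=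
    calc 4 * (k + lam 0) = 4 * 2 ^ k * (k + lam 0) * (1 / 2) ^ k := by
          rw [one_div_pow]; field_simp
      _ < (m k : ℝ) ^ (1 / p (n k)) / L k * (1 / 2) ^ k := by gcongr; exact hratio k
      _ = (m k : ℝ) ^ (1 / p (n k)) * H k := by simp only [H]; ring
  linarith [mul_le_mul_of_nonneg_right hq (hH k)]

/-- Theorem 1, necessity: if `∑ 1/λ_n = ∞` and
`limsup_n sup_{1 ≤ m ≤ 2^n} m^{1/p(n)} / ∑_{j=1}^m 1/λ_j = ∞`, then there is a
1-periodic (in each variable) function in `Λ^{#}BV` which is not in `BV^{#}(p(n) ↑ ∞)`. -/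
theorem exists_lamSharpBV_not_bvSharp
    (lam : ℕ → ℝ) (hmono : Monotone lam) (hlam1 : 1 < lam 0)
    (hdiv : Filter.Tendsto (fun m => ∑ j ∈ Finset.range m, 1 / lam j)
      Filter.atTop Filter.atTop)
    (p : ℕ → ℝ) (hp1 : ∀ n, 1 ≤ p n) (hpmono : Monotone p)
    (hptop : Filter.Tendsto p Filter.atTop Filter.atTop)
    (hunbdd : ∀ C : ℝ, ∃ n m : ℕ, 1 ≤ m ∧ m ≤ 2 ^ n ∧
      C < (m : ℝ) ^ (1 / p n) / ∑ j ∈ Finset.range m, 1 / lam j) :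
    ∃ f : ℝ → ℝ → ℝ,
      (∀ x y : ℝ, f (x + 1) y = f x y ∧ f x (y + 1) = f x y) ∧
      LamSharpBV lam f ∧ ¬ BVSharp p f :=
  exists_lamSharpBV_not_bvSharp_general lam hmono hlam1 p hp1 hunbdd
end

section
/- Let $\Lambda = \{\lambda_n\}$ be a nondecreasing sequence of positive reals with $\sum_{n=1}^\infty 1/\lambda_n = +\infty$, and let $p(n)$ be an increasing sequence with $1 \leq p(n) \uparrow \infty$. Then there exists a continuous function $f : [0,1]^2 \to \mathbb{R}$ (extendable 1-periodically in each variable) such that $f \in BV^{\#}(p(n) \uparrow \infty)$ but $f \notin \Lambda^{\#}BV$. -/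
open Finset Filter

lemma Nonoverlap.le_or_le {m : ℕ} {a b : ℕ → ℝ} (h : Nonoverlap m a b) {i j : ℕ}
    (hi : i < m) (hj : j < m) (hij : i ≠ j) : b i ≤ a j ∨ b j ≤ a i := by
  have hd := Set.Ioo_disjoint_Ioo.mp (Set.disjoint_iff_inter_eq_empty.mpr (h.2 i hi j hj hij))
  have hai := (h.1 i hi).2.1
  have haj := (h.1 j hj).2.1
  simp only [min_le_iff, le_max_iff] at hd
  rcases hd with (hd | hd) | (hd | hd)
  · linarith
  · exact .inr hd
  · exact .inl hd
  · linarith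

lemma Nonoverlap.mem_Icc {m : ℕ} {a b : ℕ → ℝ} (h : Nonoverlap m a b) {i : ℕ} (hi : i < m) :
    a i ∈ Set.Icc 0 1 ∧ b i ∈ Set.Icc 0 1 := by
  obtain ⟨h0, hab, h1⟩ := h.1 i hi
  exact ⟨⟨h0, by linarith⟩, ⟨by linarith, h1⟩⟩

lemma nonoverlap_of_le_or_le {m : ℕ} {a b : ℕ → ℝ}
    (hab : ∀ i < m, 0 ≤ a i ∧ a i < b i ∧ b i ≤ 1)
    (hdisj : ∀ i < m, ∀ j < m, i ≠ j → b i ≤ a j ∨ b j ≤ a i) : Nonoverlap m a b := by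
  refine ⟨hab, fun i hi j hj hij => Set.disjoint_iff_inter_eq_empty.mp ?_⟩
  refine Set.Ioo_disjoint_Ioo.mpr ?_
  rcases hdisj i hi j hj hij with h | h
  · exact (min_le_left _ _).trans (h.trans (le_max_right _ _))
  · exact (min_le_right _ _).trans (h.trans (le_max_left _ _))

lemma Nonoverlap.le_abs_sub {m : ℕ} {a b : ℕ → ℝ} (h : Nonoverlap m a b) {e : ℝ}
    (hlen : ∀ i < m, e ≤ b i - a i) {i j : ℕ} (hi : i < m) (hj : j < m) (hij : i ≠ j) :
    e ≤ |a i - a j| ∧ e ≤ |b i - b j| := by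
  have hei := hlen i hi
  have hej := hlen j hj
  rcases h.le_or_le hi hj hij with hb | hb
  · exact ⟨le_abs.mpr (.inr (by linarith)), le_abs.mpr (.inr (by linarith))⟩
  · exact ⟨le_abs.mpr (.inl (by linarith)), le_abs.mpr (.inl (by linarith))⟩

lemma Monotone.sum_sub_le {g : ℝ → ℝ} (hg : Monotone g) {a b : ℕ → ℝ} (s : Finset ℕ)
    {A B : ℝ} (hAB : A ≤ B) (hab : ∀ i ∈ s, A ≤ a i ∧ a i < b i ∧ b i ≤ B)
    (hdisj : ∀ i ∈ s, ∀ j ∈ s, i ≠ j → b i ≤ a j ∨ b j ≤ a i) :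
    ∑ i ∈ s, (g (b i) - g (a i)) ≤ g B - g A := by
  classical
  induction s using Finset.induction_on_max_value b generalizing B with
  | empty => simpa using hg hAB
  | insert i s hi hmax ih =>
    obtain ⟨hAi, -, hiB⟩ := hab i (mem_insert_self i s)
    -- the interval with the rightmost endpoint lies to the right of all the others
    have hleft : ∀ j ∈ s, A ≤ a j ∧ a j < b j ∧ b j ≤ a i := fun j hj => by
      obtain ⟨hAj, hj', -⟩ := hab j (mem_insert_of_mem hj)
      refine ⟨hAj, hj', ?_⟩
      rcases hdisj j (mem_insert_of_mem hj) i (mem_insert_self i s) (ne_of_mem_of_not_mem hj hi)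
        with h | h
      · exact h
      · linarith [hmax j hj]
    have hs := ih hAi hleft fun j hj k hk =>
      hdisj j (mem_insert_of_mem hj) k (mem_insert_of_mem hk)
    rw [sum_insert hi]
    linarith [hg hiB]

lemma Nonoverlap.sum_sub_le_of_monotone {m : ℕ} {a b : ℕ → ℝ} (h : Nonoverlap m a b)
    {g : ℝ → ℝ} (hg : Monotone g) : ∑ i ∈ range m, (g (b i) - g (a i)) ≤ g 1 - g 0 :=
  hg.sum_sub_le _ zero_le_one (fun i hi => h.1 i (mem_range.mp hi))
    fun _ hi _ hj => h.le_or_le (mem_range.mp hi) (mem_range.mp hj)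

lemma Lp_sum_le_sum_Lp {ι κ : Type*} (s : Finset ι) (t : Finset κ) {P : ℝ} (hP : 1 ≤ P)
    {g : κ → ι → ℝ} (hg : ∀ k i, 0 ≤ g k i) :
    (∑ i ∈ s, (∑ k ∈ t, g k i) ^ P) ^ (1 / P) ≤ ∑ k ∈ t, (∑ i ∈ s, g k i ^ P) ^ (1 / P) := by
  induction t using Finset.cons_induction with
  | empty =>
    simp [Real.zero_rpow (by positivity : P ≠ 0), Real.zero_rpow (by positivity : P⁻¹ ≠ 0)]
  | cons k t _ ih =>
    simp only [sum_cons]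
    calc (∑ i ∈ s, (g k i + ∑ k ∈ t, g k i) ^ P) ^ (1 / P)
        ≤ (∑ i ∈ s, g k i ^ P) ^ (1 / P) + (∑ i ∈ s, (∑ k ∈ t, g k i) ^ P) ^ (1 / P) :=
          Real.Lp_add_le_of_nonneg s hP (fun i _ => hg k i)
            fun i _ => sum_nonneg fun k _ => hg k i
      _ ≤ _ := add_le_add_right ih _

lemma rpow_one_div_le_two_mul {S c h P : ℝ} (hS : 0 ≤ S) (hh : 0 ≤ h) (hP : 0 < P)
    (hc2 : c ≤ 2 ^ P) (hSc : S ≤ c * h ^ P) : S ^ (1 / P) ≤ 2 * h := by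
  rw [one_div, Real.rpow_inv_le_iff_of_pos hS (by positivity) hP, Real.mul_rpow zero_le_two hh]
  exact hSc.trans (mul_le_mul_of_nonneg_right hc2 (Real.rpow_nonneg hh P))

lemma sum_rpow_le_of_sum_le {ι : Type*} {s : Finset ι} {x : ι → ℝ} {c h P : ℝ} (hh : 0 ≤ h)
    (hP : 1 ≤ P) (hx : ∀ i ∈ s, 0 ≤ x i ∧ x i ≤ h) (hsum : ∑ i ∈ s, x i ≤ c * h) :
    ∑ i ∈ s, x i ^ P ≤ c * h ^ P := by
  calc ∑ i ∈ s, x i ^ P = ∑ i ∈ s, x i ^ (P - 1) * x i := by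
        refine sum_congr rfl fun i hi => ?_
        rw [← Real.rpow_add_one' (hx i hi).1 (by linarith), sub_add_cancel]
    _ ≤ ∑ i ∈ s, h ^ (P - 1) * x i := sum_le_sum fun i hi =>
        mul_le_mul_of_nonneg_right
          (Real.rpow_le_rpow (hx i hi).1 (hx i hi).2 (by linarith)) (hx i hi).1
    _ ≤ h ^ (P - 1) * (c * h) := by
        rw [← mul_sum]; exact mul_le_mul_of_nonneg_left hsum (Real.rpow_nonneg hh _)
    _ = c * h ^ P := by
        rw [mul_left_comm, ← Real.rpow_add_one' hh (by linarith), sub_add_cancel]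

/-- The triangle wave of height `1` with `L` teeth on `[0, 2L]`, extended by `0`: the distance
from the argument, clamped to `[0, 2L]`, to `2ℤ`. -/
noncomputable def zigzag (L : ℕ) (t : ℝ) : ℝ :=
  ‖((max 0 (min (2 * (L : ℝ)) t) : ℝ) : AddCircle (2 : ℝ))‖

section Zigzag

variable {L : ℕ} {s t : ℝ}

lemma norm_coe_two_mul_natCast (n : ℕ) : ‖((2 * n : ℝ) : AddCircle (2 : ℝ))‖ = 0 := by
  rw [norm_eq_zero, AddCircle.coe_eq_zero_iff]
  exact ⟨n, by simp [zsmul_eq_mul, mul_comm]⟩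

lemma zigzag_nonneg (L : ℕ) (t : ℝ) : 0 ≤ zigzag L t := norm_nonneg _

lemma zigzag_le_one (L : ℕ) (t : ℝ) : zigzag L t ≤ 1 :=
  (AddCircle.norm_le_half_period _ two_ne_zero).trans_eq (by norm_num)

lemma zigzag_of_nonpos (ht : t ≤ 0) : zigzag L t = 0 := by
  simp [zigzag, max_eq_left (min_le_of_right_le ht)]

lemma zigzag_of_two_mul_le (ht : 2 * L ≤ t) : zigzag L t = 0 := by
  rw [zigzag, min_eq_left ht, max_eq_right (by positivity)]
  exact norm_coe_two_mul_natCast L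

lemma zigzag_two_mul {k : ℕ} (hk : k ≤ L) : zigzag L (2 * k) = 0 := by
  have : (2 * k : ℝ) ≤ 2 * L := by exact_mod_cast Nat.mul_le_mul_left 2 hk
  rw [zigzag, min_eq_right this, max_eq_right (by positivity)]
  exact norm_coe_two_mul_natCast k

lemma zigzag_two_mul_add_one {k : ℕ} (hk : k < L) : zigzag L (2 * k + 1) = 1 := by
  have : (2 * k + 1 : ℝ) ≤ 2 * L := by exact_mod_cast (by omega : 2 * k + 1 ≤ 2 * L)
  rw [zigzag, min_eq_right this, max_eq_right (by positivity), AddCircle.coe_add,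
    norm_coe_two_mul_natCast k |> norm_eq_zero.mp, zero_add,
    (AddCircle.norm_coe_eq_abs_iff _ two_ne_zero).mpr (by norm_num), abs_one]

lemma monotone_clamp (c : ℝ) : Monotone fun t : ℝ => max 0 (min c t) :=
  fun _ _ h => max_le_max le_rfl (min_le_min le_rfl h)

lemma abs_zigzag_sub_le (hst : s ≤ t) :
    |zigzag L t - zigzag L s| ≤ max 0 (min (2 * (L : ℝ)) t) - max 0 (min (2 * (L : ℝ)) s) := by
  refine (abs_norm_sub_norm_le _ _).trans ?_
  rw [← AddCircle.coe_sub]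
  refine QuotientAddGroup.norm_mk_le_norm.trans_eq ?_
  rw [Real.norm_eq_abs, abs_of_nonneg (sub_nonneg.mpr (monotone_clamp _ hst))]

lemma continuous_zigzag (L : ℕ) : Continuous (zigzag L) :=
  continuous_norm.comp <| (AddCircle.continuous_mk' _).comp (by fun_prop)

end Zigzag

lemma Nonoverlap.sum_rpow_le_two_of_short_support {m : ℕ} {a b : ℕ → ℝ} (hab : Nonoverlap m a b)
    {g : ℝ → ℝ} {q u e h P : ℝ} (hlen : ∀ i < m, e ≤ b i - a i) (hue : u ≤ e) (hP : 0 < P)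
    (hg0 : ∀ x ∉ Set.Ioo q (q + u), g x = 0) (hh : 0 ≤ h)
    (hg : ∀ i < m, |g (b i) - g (a i)| ≤ h) :
    ∑ i ∈ range m, |g (b i) - g (a i)| ^ P ≤ 2 * h ^ P := by
  classical
  set R := Set.Ioo q (q + u)
  -- intervals of length `≥ e ≥ u` cannot have two left (or two right) endpoints in `R`
  have hcard : ∀ x : ℕ → ℝ, (∀ i < m, ∀ j < m, i ≠ j → e ≤ |x i - x j|) →
      #{i ∈ range m | x i ∈ R} ≤ 1 := by
    intro x hx
    refine card_le_one.mpr fun i hi j hj => ?_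
    simp only [mem_filter, mem_range, R, Set.mem_Ioo] at hi hj
    by_contra hij
    have hlt : |x i - x j| < u := abs_sub_lt_iff.mpr ⟨by linarith, by linarith⟩
    linarith [hx i hi.1 j hj.1 hij]
  have hpt : ∀ i ∈ range m, |g (b i) - g (a i)| ^ P ≤
      (if a i ∈ R then h ^ P else 0) + (if b i ∈ R then h ^ P else 0) := by
    intro i hi
    have hle := Real.rpow_le_rpow (abs_nonneg _) (hg i (mem_range.mp hi)) hP.le
    have := Real.rpow_nonneg hh P
    by_cases ha : a i ∈ R <;> by_cases hb : b i ∈ R <;> simp only [ha, hb, if_true, if_false]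
      <;> try linarith
    rw [hg0 _ ha, hg0 _ hb, sub_self, abs_zero, Real.zero_rpow hP.ne', add_zero]
  have ha := hcard a fun i hi j hj hij => (hab.le_abs_sub hlen hi hj hij).1
  have hb := hcard b fun i hi j hj hij => (hab.le_abs_sub hlen hi hj hij).2
  calc ∑ i ∈ range m, |g (b i) - g (a i)| ^ P
      ≤ ∑ i ∈ range m, ((if a i ∈ R then h ^ P else 0) + (if b i ∈ R then h ^ P else 0)) :=
        sum_le_sum hpt
    _ = (#{i ∈ range m | a i ∈ R} + #{i ∈ range m | b i ∈ R} : ℕ) * h ^ P := by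
        rw [sum_add_distrib, ← sum_filter, ← sum_filter, sum_const, sum_const, nsmul_eq_mul,
          nsmul_eq_mul]
        push_cast
        ring
    _ ≤ 2 * h ^ P :=
        mul_le_mul_of_nonneg_right (by exact_mod_cast add_le_add ha hb) (Real.rpow_nonneg hh P)

/-- `L` teeth of height `h` filling the interval `[q, q + u]`. -/
noncomputable def block (L : ℕ) (h q u x : ℝ) : ℝ := h * zigzag L (2 * L * (x - q) / u)

/-- Tooth `k` of `block L h q u` rises from node `2 * k` to node `2 * k + 1`. -/
noncomputable def node (L : ℕ) (q u : ℝ) (j : ℕ) : ℝ := q + j * (u / (2 * L))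

section Block

variable {L : ℕ} {h q u x : ℝ}

lemma node_mono (hu : 0 ≤ u) {j j' : ℕ} (hj : j ≤ j') : node L q u j ≤ node L q u j' := by
  have : 0 ≤ u / (2 * L) := by positivity
  unfold node
  gcongr

lemma node_lt_node_succ (hu : 0 < u) (hL : 0 < L) (j : ℕ) :
    node L q u j < node L q u (j + 1) := by
  rw [node, node]
  push_cast
  nlinarith [(by positivity : 0 < u / (2 * L))]

lemma node_mem_Icc (hu : 0 ≤ u) {j : ℕ} (hj : j ≤ 2 * L) :
    node L q u j ∈ Set.Icc q (q + u) := by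
  refine ⟨le_add_of_nonneg_right (by positivity), ?_⟩
  rcases Nat.eq_zero_or_pos L with rfl | hL
  · simp [node, hu]
  · calc node L q u j ≤ node L q u (2 * L) := node_mono hu hj
      _ = q + u := by rw [node]; push_cast; field_simp

lemma nonoverlap_nodes (hq : 0 ≤ q) (hu : 0 < u) (hqu : q + u ≤ 1) :
    Nonoverlap L (fun k => node L q u (2 * k)) (fun k => node L q u (2 * k + 1)) := by
  refine nonoverlap_of_le_or_le (fun k hk => ⟨?_, node_lt_node_succ hu (by omega) _, ?_⟩)
    fun k _ k' _ hkk' => ?_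
  · exact hq.trans (node_mem_Icc hu.le (by omega)).1
  · exact (node_mem_Icc hu.le (by omega)).2.trans hqu
  · rcases hkk'.lt_or_gt with h | h
    · exact .inl (node_mono hu.le (by omega))
    · exact .inr (node_mono hu.le (by omega))

lemma block_nonneg (hh : 0 ≤ h) : 0 ≤ block L h q u x := mul_nonneg hh (zigzag_nonneg _ _)

lemma block_le (hh : 0 ≤ h) : block L h q u x ≤ h :=
  mul_le_of_le_one_right hh (zigzag_le_one _ _)

lemma abs_block_sub_le (hh : 0 ≤ h) (y : ℝ) : |block L h q u x - block L h q u y| ≤ h :=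
  abs_sub_le_of_nonneg_of_le (block_nonneg hh) (block_le hh) (block_nonneg hh) (block_le hh)

lemma block_eq_zero_of_notMem (hu : 0 < u) (hx : x ∉ Set.Ioo q (q + u)) :
    block L h q u x = 0 := by
  refine mul_eq_zero_of_right h ?_
  rcases le_or_gt x q with hxq | hxq
  · exact zigzag_of_nonpos (div_nonpos_of_nonpos_of_nonneg
      (mul_nonpos_of_nonneg_of_nonpos (by positivity) (by linarith)) hu.le)
  · have hux : u ≤ x - q := by
      by_contra hxu
      exact hx ⟨hxq, by linarith⟩
    exact zigzag_of_two_mul_le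
      ((le_div_iff₀ hu).mpr (mul_le_mul_of_nonneg_left hux (by positivity)))

lemma block_node_two_mul_add_one {k : ℕ} (hu : 0 < u) (hk : k < L) :
    block L h q u (node L q u (2 * k + 1)) = h := by
  have hL : (L : ℝ) ≠ 0 := Nat.cast_ne_zero.mpr (by omega)
  have : 2 * L * (node L q u (2 * k + 1) - q) / u = 2 * k + 1 := by
    rw [node]
    field_simp
    push_cast
    ring
  rw [block, this, zigzag_two_mul_add_one hk, mul_one]

lemma block_node_two_mul {k : ℕ} (hu : 0 < u) (hk : k < L) :
    block L h q u (node L q u (2 * k)) = 0 := by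
  have hL : (L : ℝ) ≠ 0 := Nat.cast_ne_zero.mpr (by omega)
  have : 2 * L * (node L q u (2 * k) - q) / u = 2 * k := by
    rw [node]
    field_simp
    push_cast
    ring
  rw [block, this, zigzag_two_mul hk.le, mul_zero]

lemma continuous_block : Continuous (block L h q u) :=
  continuous_const.mul <| (continuous_zigzag L).comp (by fun_prop)

lemma Nonoverlap.sum_abs_block_sub_le {m : ℕ} {a b : ℕ → ℝ} (hab : Nonoverlap m a b)
    (hh : 0 ≤ h) (hu : 0 < u) :
    ∑ i ∈ range m, |block L h q u (b i) - block L h q u (a i)| ≤ 2 * L * h := by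
  set G : ℝ → ℝ := fun x => max 0 (min (2 * (L : ℝ)) (2 * L * (x - q) / u))
  have hτ : Monotone fun x : ℝ => 2 * L * (x - q) / u := fun x y hxy =>
    div_le_div_of_nonneg_right (mul_le_mul_of_nonneg_left (by linarith) (by positivity)) hu.le
  have hG : Monotone G := (monotone_clamp _).comp hτ
  calc ∑ i ∈ range m, |block L h q u (b i) - block L h q u (a i)|
      ≤ ∑ i ∈ range m, h * (G (b i) - G (a i)) := sum_le_sum fun i hi => by
        rw [block, block, ← mul_sub, abs_mul, abs_of_nonneg hh]
        exact mul_le_mul_of_nonneg_left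
          (abs_zigzag_sub_le (hτ (hab.1 i (mem_range.mp hi)).2.1.le)) hh
    _ = h * ∑ i ∈ range m, (G (b i) - G (a i)) := (mul_sum ..).symm
    _ ≤ h * (G 1 - G 0) := mul_le_mul_of_nonneg_left (hab.sum_sub_le_of_monotone hG) hh
    _ ≤ 2 * L * h := by
        have h1 : G 1 ≤ 2 * L := max_le (by positivity) (min_le_left _ _)
        have h0 : 0 ≤ G 0 := le_max_left _ _
        nlinarith

lemma Nonoverlap.block_Lp_le {m : ℕ} {a b : ℕ → ℝ} (hab : Nonoverlap m a b) (hh : 0 ≤ h)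
    (hu : 0 < u) {e P : ℝ} (hP : 1 ≤ P) (hlen : ∀ i < m, e ≤ b i - a i)
    (hcase : u ≤ e ∨ 2 * L ≤ (2 : ℝ) ^ P) :
    (∑ i ∈ range m, |block L h q u (b i) - block L h q u (a i)| ^ P) ^ (1 / P) ≤ 2 * h := by
  have hS : 0 ≤ ∑ i ∈ range m, |block L h q u (b i) - block L h q u (a i)| ^ P :=
    sum_nonneg fun i _ => Real.rpow_nonneg (abs_nonneg _) _
  rcases hcase with hue | hL
  · refine rpow_one_div_le_two_mul (c := 2) hS hh (by linarith) ?_ ?_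
    · simpa using Real.rpow_le_rpow_of_exponent_le one_le_two hP
    · exact hab.sum_rpow_le_two_of_short_support hlen hue (by linarith)
        (fun _ hx => block_eq_zero_of_notMem hu hx) hh fun _ _ => abs_block_sub_le hh _
  · exact rpow_one_div_le_two_mul hS hh (by linarith) hL
      (sum_rpow_le_of_sum_le hh hP (fun _ _ => ⟨abs_nonneg _, abs_block_sub_le hh _⟩)
        (hab.sum_abs_block_sub_le hh hu))

end Block

noncomputable def layer (L N : ℕ → ℕ) (ℓ : ℕ) : ℝ → ℝ :=
  block (L ℓ) ((1 / 2) ^ ℓ) ((1 / 2) ^ (ℓ + 1)) ((1 / 2) ^ (ℓ + 1 + N ℓ))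

noncomputable def layerSum (L N : ℕ → ℕ) (x : ℝ) : ℝ := ∑' ℓ, layer L N ℓ x

section LayerSum

variable {L N : ℕ → ℕ} {x : ℝ}

lemma half_pow_succ_add_le (ℓ n : ℕ) :
    (1 / 2 : ℝ) ^ (ℓ + 1) + (1 / 2) ^ (ℓ + 1 + n) ≤ (1 / 2) ^ ℓ := by
  have h1 : (1 / 2 : ℝ) ^ (ℓ + 1 + n) ≤ (1 / 2) ^ (ℓ + 1) :=
    pow_le_pow_of_le_one (by norm_num) (by norm_num) (by omega)
  have h2 : (1 / 2 : ℝ) ^ (ℓ + 1) = (1 / 2) ^ ℓ / 2 := by rw [pow_succ]; ring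
  linarith

lemma layer_eq_zero {ℓ : ℕ} (hx : x ≤ (1 / 2) ^ (ℓ + 1) ∨ (1 / 2) ^ ℓ ≤ x) :
    layer L N ℓ x = 0 :=
  block_eq_zero_of_notMem (by positivity) fun h => by
    rcases hx with hx | hx
    · linarith [h.1]
    · linarith [h.2, half_pow_succ_add_le ℓ (N ℓ)]

lemma layer_eq_zero_of_ne {ℓ ℓ' : ℕ} (hne : ℓ' ≠ ℓ)
    (hx : x ∈ Set.Icc ((1 / 2) ^ (ℓ + 1)) ((1 / 2) ^ (ℓ + 1) + (1 / 2) ^ (ℓ + 1 + N ℓ))) :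
    layer L N ℓ' x = 0 := by
  apply layer_eq_zero
  rcases hne.lt_or_gt with h | h
  · have : (1 / 2 : ℝ) ^ ℓ ≤ (1 / 2) ^ (ℓ' + 1) :=
      pow_le_pow_of_le_one (by norm_num) (by norm_num) (by omega)
    exact .inl (by linarith [hx.2, half_pow_succ_add_le ℓ (N ℓ)])
  · have : (1 / 2 : ℝ) ^ ℓ' ≤ (1 / 2) ^ (ℓ + 1) :=
      pow_le_pow_of_le_one (by norm_num) (by norm_num) (by omega)
    exact .inr (by linarith [hx.1])

lemma eventually_layer_eq_zero (x : ℝ) : ∀ᶠ ℓ in atTop, layer L N ℓ x = 0 := by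
  rcases le_or_gt x 0 with hx | hx
  · exact .of_forall fun ℓ => layer_eq_zero (.inl (hx.trans (by positivity)))
  · filter_upwards [(tendsto_pow_atTop_nhds_zero_of_lt_one (by norm_num)
      (by norm_num : (1 / 2 : ℝ) < 1)).eventually (ge_mem_nhds hx)] with ℓ hℓ
    exact layer_eq_zero (.inr hℓ)

lemma layerSum_eq_sum {K : ℕ} (hK : ∀ ℓ ≥ K, layer L N ℓ x = 0) :
    layerSum L N x = ∑ ℓ ∈ range K, layer L N ℓ x :=
  tsum_eq_sum fun ℓ hℓ => hK ℓ (by simpa using hℓ)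

lemma layerSum_eq_layer {ℓ : ℕ}
    (hx : x ∈ Set.Icc ((1 / 2) ^ (ℓ + 1)) ((1 / 2) ^ (ℓ + 1) + (1 / 2) ^ (ℓ + 1 + N ℓ))) :
    layerSum L N x = layer L N ℓ x :=
  tsum_eq_single ℓ fun _ h => layer_eq_zero_of_ne h hx

lemma layerSum_zero : layerSum L N 0 = 0 := by
  simpa using layerSum_eq_sum (L := L) (N := N) (K := 0) (x := 0)
    fun ℓ _ => layer_eq_zero (.inl (by positivity))

lemma layerSum_one : layerSum L N 1 = 0 := by
  simpa using layerSum_eq_sum (L := L) (N := N) (K := 0) (x := 1)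
    fun ℓ _ => layer_eq_zero (.inr (pow_le_one₀ (by norm_num) (by norm_num)))

lemma layerSum_fract (hx : x ∈ Set.Icc 0 1) : layerSum L N (Int.fract x) = layerSum L N x := by
  rcases hx.2.lt_or_eq with hx1 | rfl
  · rw [Int.fract_eq_self.mpr ⟨hx.1, hx1⟩]
  · rw [Int.fract_one, layerSum_zero, layerSum_one]

lemma continuous_layerSum : Continuous (layerSum L N) :=
  continuous_tsum (fun _ => continuous_block) summable_geometric_two fun ℓ x => by
    rw [Real.norm_eq_abs, layer, abs_of_nonneg (block_nonneg (by positivity))]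
    exact block_le (by positivity)

lemma Nonoverlap.layerSum_Lp_le {m : ℕ} {a b : ℕ → ℝ} (hab : Nonoverlap m a b) {e P : ℝ}
    (hP : 1 ≤ P) (hlen : ∀ i < m, e ≤ b i - a i)
    (hcase : ∀ ℓ, (1 / 2 : ℝ) ^ (ℓ + 1 + N ℓ) ≤ e ∨ 2 * L ℓ ≤ (2 : ℝ) ^ P) :
    (∑ i ∈ range m, |layerSum L N (b i) - layerSum L N (a i)| ^ P) ^ (1 / P) ≤ 4 := by
  -- only finitely many layers are seen by the finitely many endpoints
  obtain ⟨K, hK⟩ := eventually_atTop.mp <| (eventually_all_finset (range m)).mpr fun i _ =>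
    (eventually_layer_eq_zero (L := L) (N := N) (a i)).and (eventually_layer_eq_zero (b i))
  have hsplit : ∀ i ∈ range m, |layerSum L N (b i) - layerSum L N (a i)| ≤
      ∑ ℓ ∈ range K, |layer L N ℓ (b i) - layer L N ℓ (a i)| := fun i hi => by
    rw [layerSum_eq_sum fun ℓ hℓ => (hK ℓ hℓ i hi).2,
      layerSum_eq_sum fun ℓ hℓ => (hK ℓ hℓ i hi).1, ← sum_sub_distrib]
    exact abs_sum_le_sum_abs _ _
  calc (∑ i ∈ range m, |layerSum L N (b i) - layerSum L N (a i)| ^ P) ^ (1 / P)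
      ≤ (∑ i ∈ range m, (∑ ℓ ∈ range K, |layer L N ℓ (b i) - layer L N ℓ (a i)|) ^ P) ^ (1 / P) :=
        by gcongr with i hi; exact hsplit i hi
    _ ≤ ∑ ℓ ∈ range K, (∑ i ∈ range m, |layer L N ℓ (b i) - layer L N ℓ (a i)| ^ P) ^ (1 / P) :=
        Lp_sum_le_sum_Lp _ _ hP fun _ _ => abs_nonneg _
    _ ≤ ∑ ℓ ∈ range K, 2 * (1 / 2 : ℝ) ^ ℓ :=
        sum_le_sum fun ℓ _ => hab.block_Lp_le (by positivity) (by positivity) hP hlen (hcase ℓ)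
    _ ≤ 4 := by
        rw [← mul_sum]
        linarith [sum_geometric_two_le K]

lemma layerSum_node_sub_node (ℓ : ℕ) {k : ℕ} (hk : k < L ℓ) :
    layerSum L N (node (L ℓ) ((1 / 2) ^ (ℓ + 1)) ((1 / 2) ^ (ℓ + 1 + N ℓ)) (2 * k + 1)) -
      layerSum L N (node (L ℓ) ((1 / 2) ^ (ℓ + 1)) ((1 / 2) ^ (ℓ + 1 + N ℓ)) (2 * k)) =
      (1 / 2) ^ ℓ := by
  rw [layerSum_eq_layer (node_mem_Icc (by positivity) (by omega)),
    layerSum_eq_layer (node_mem_Icc (by positivity) (by omega)), layer,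
    block_node_two_mul_add_one (by positivity) hk, block_node_two_mul (by positivity) hk,
    sub_zero]

end LayerSum

lemma bvSharpV2_of_forall_eq {p : ℕ → ℝ} (hp : ∀ n, p n ≠ 0) (g : ℝ → ℝ) {M : ℝ}
    (hM : 0 ≤ M) :
    BVSharpV2 p (fun x _ => g x) M := fun n _ _ _ _ _ _ _ => by
  simpa [Real.zero_rpow (hp n), Real.zero_rpow (inv_ne_zero (hp n))] using hM

section Witness

variable {L N : ℕ → ℕ}

lemma bvSharpV1_layerSum_fract {p : ℕ → ℝ} (hp1 : ∀ n, 1 ≤ p n) (hpmono : Monotone p)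
    (hN : ∀ ℓ, 2 * L ℓ ≤ (2 : ℝ) ^ p (N ℓ)) :
    BVSharpV1 p (fun x _ => layerSum L N (Int.fract x)) 4 := by
  intro n m a b y hab hlen _
  have hcase : ∀ ℓ, (1 / 2 : ℝ) ^ (ℓ + 1 + N ℓ) ≤ 1 / 2 ^ n ∨ 2 * L ℓ ≤ (2 : ℝ) ^ p n :=
    fun ℓ => (le_total n (N ℓ)).imp
      (fun h => one_div_pow (2 : ℝ) n ▸
        pow_le_pow_of_le_one (by norm_num) (by norm_num) (by omega))
      fun h => (hN ℓ).trans (Real.rpow_le_rpow_of_exponent_le one_le_two (hpmono h))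
  dsimp only
  rw [sum_congr rfl fun i hi => by rw [layerSum_fract (hab.mem_Icc (mem_range.mp hi)).1,
    layerSum_fract (hab.mem_Icc (mem_range.mp hi)).2]]
  exact hab.layerSum_Lp_le (hp1 n) hlen hcase

lemma not_lamSharpV1_layerSum_fract {lam : ℕ → ℝ}
    (hL : ∀ ℓ : ℕ, ℓ < (1 / 2 : ℝ) ^ ℓ * ∑ j ∈ range (L ℓ), 1 / lam j) (M : ℝ) :
    ¬ LamSharpV1 lam (fun x _ => layerSum L N (Int.fract x)) M := by
  intro hM
  obtain ⟨ℓ, hℓ⟩ := exists_nat_ge M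
  have hnodes := nonoverlap_nodes (L := L ℓ) (by positivity : (0 : ℝ) ≤ (1 / 2) ^ (ℓ + 1))
    (by positivity : (0 : ℝ) < (1 / 2) ^ (ℓ + 1 + N ℓ))
    ((half_pow_succ_add_le ℓ (N ℓ)).trans (pow_le_one₀ (by norm_num) (by norm_num)))
  have hsum := hM _ _ _ (fun _ => 0) hnodes fun _ _ => ⟨le_rfl, zero_le_one⟩
  dsimp only at hsum
  rw [sum_congr rfl fun k hk => by
    rw [layerSum_fract (hnodes.mem_Icc (mem_range.mp hk)).1,
      layerSum_fract (hnodes.mem_Icc (mem_range.mp hk)).2,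
      layerSum_node_sub_node ℓ (mem_range.mp hk), abs_of_pos (by positivity), ← mul_one_div],
    ← mul_sum] at hsum
  linarith [hL ℓ]

end Witness

theorem exists_continuous_bvSharp_not_lamSharpBV_general
    (lam : ℕ → ℝ)
    (hdiv : Filter.Tendsto (fun m => ∑ j ∈ Finset.range m, 1 / lam j)
      Filter.atTop Filter.atTop)
    (p : ℕ → ℝ) (hp1 : ∀ n, 1 ≤ p n) (hpmono : Monotone p)
    (hptop : Filter.Tendsto p Filter.atTop Filter.atTop) :
    ∃ f : ℝ → ℝ → ℝ,
      (∀ x y : ℝ, f (x + 1) y = f x y ∧ f x (y + 1) = f x y) ∧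
      Continuous (fun q : ℝ × ℝ => f q.1 q.2) ∧
      BVSharp p f ∧ ¬ LamSharpBV lam f := by
  choose L hL using fun ℓ : ℕ => ((hdiv.const_mul_atTop
    (by positivity : (0 : ℝ) < (1 / 2) ^ ℓ)).eventually_gt_atTop (ℓ : ℝ)).exists
  choose N hN using fun ℓ : ℕ => (((tendsto_rpow_atTop_of_base_gt_one 2 one_lt_two).comp
    hptop).eventually_ge_atTop (2 * L ℓ : ℝ)).exists
  refine ⟨fun x _ => layerSum L N (Int.fract x),
    fun x y => ⟨congrArg (layerSum L N) (Int.fract_add_one x), rfl⟩,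
    (continuous_layerSum.continuousOn.comp_fract'' (by rw [layerSum_zero, layerSum_one])).comp
      continuous_fst, ⟨4, bvSharpV1_layerSum_fract hp1 hpmono hN, ?_⟩,
    fun ⟨M, hM, _⟩ => not_lamSharpV1_layerSum_fract hL M hM⟩
  exact bvSharpV2_of_forall_eq (fun n => (zero_lt_one.trans_le (hp1 n)).ne') _ (by norm_num)

/-- Theorem 2: if `∑ 1/λ_n = ∞`, there is a continuous function,
1-periodic in each variable, belonging to `BV^{#}(p(n) ↑ ∞)` but not to `Λ^{#}BV`. -/
theorem exists_continuous_bvSharp_not_lamSharpBV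
    (lam : ℕ → ℝ) (hmono : Monotone lam) (hpos : ∀ n, 0 < lam n)
    (hdiv : Filter.Tendsto (fun m => ∑ j ∈ Finset.range m, 1 / lam j)
      Filter.atTop Filter.atTop)
    (p : ℕ → ℝ) (hp1 : ∀ n, 1 ≤ p n) (hpmono : Monotone p)
    (hptop : Filter.Tendsto p Filter.atTop Filter.atTop) :
    ∃ f : ℝ → ℝ → ℝ,
      (∀ x y : ℝ, f (x + 1) y = f x y ∧ f x (y + 1) = f x y) ∧
      Continuous (fun q : ℝ × ℝ => f q.1 q.2) ∧
      BVSharp p f ∧ ¬ LamSharpBV lam f :=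
  exists_continuous_bvSharp_not_lamSharpBV_general lam hdiv p hp1 hpmono hptop
end

section
/- Let $\Lambda = \{\lambda_n\}$ be a nondecreasing sequence of positive reals. The class $\Lambda^{\#}BV$ of functions on $[0,1]^2$ coincides with the class $B([0,1]^2)$ of all bounded functions on $[0,1]^2$ if and only if $\sum_{n=1}^\infty 1/\lambda_n < \infty$. -/
/-- `Λ^{#}BV` coincides with the class of all functions bounded on
`[0,1]²` if and only if `∑ 1/λ_n < ∞`. -/
theorem lamSharpBV_eq_bounded_iff_summable
    (lam : ℕ → ℝ) (hmono : Monotone lam) (hpos : ∀ n, 0 < lam n) :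
    (∀ f : ℝ → ℝ → ℝ,
        LamSharpBV lam f ↔
          ∃ C : ℝ, ∀ x ∈ Set.Icc (0:ℝ) 1, ∀ y ∈ Set.Icc (0:ℝ) 1, |f x y| ≤ C) ↔
      Summable (fun n => 1 / lam n) := by
  constructor
  · -- class equality implies summability
    intro h
    set f : ℝ → ℝ → ℝ := fun x y => if x = y then 1 else 0 with hf
    obtain ⟨M, h1, -⟩ := (h f).2 ⟨1, by
      intro x _ y _
      simp only [hf]
      split <;> norm_num⟩
    apply summable_of_sum_range_le (c := M)
      (fun n => by have := hpos n; positivity)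
    intro m
    rcases Nat.eq_zero_or_pos m with rfl | hm
    · simpa using h1 0 (fun _ => 0) (fun _ => 1) (fun _ => 0)
        ⟨by simp, by simp⟩ (by simp)
    have hm' : (0:ℝ) < m := by exact_mod_cast hm
    have key := h1 m (fun i => (i:ℝ) / m) (fun i => ((i:ℝ)+1) / m)
        (fun i => ((i:ℝ)+1) / m) ?_ ?_
    · have : ∑ i ∈ Finset.range m, (1:ℝ) / lam i
          = ∑ i ∈ Finset.range m,
              |f (((i:ℝ)+1)/m) (((i:ℝ)+1)/m) - f ((i:ℝ)/m) (((i:ℝ)+1)/m)| / lam i := by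
        apply Finset.sum_congr rfl
        intro i hi
        have hne : (i:ℝ)/m ≠ ((i:ℝ)+1)/m := by
          have : (i:ℝ)/m < ((i:ℝ)+1)/m := by
            rw [div_lt_div_iff_of_pos_right hm']; linarith
          exact ne_of_lt this
        simp [hf, hne]
      rw [this]; exact key
    · constructor
      · intro i hi
        refine ⟨by positivity, ?_, ?_⟩
        · rw [div_lt_div_iff_of_pos_right hm']; linarith
        · rw [div_le_one hm']
          have : (i:ℝ) + 1 ≤ m := by exact_mod_cast hi
          linarith
      · intro i _ j _ hij
        rw [Set.eq_empty_iff_forall_notMem]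
        rintro x ⟨⟨hx1, hx2⟩, hx3, hx4⟩
        rcases lt_or_gt_of_ne hij with hlt | hlt
        · have h1 : ((i:ℝ)+1)/m ≤ (j:ℝ)/m := by
            rw [div_le_div_iff_of_pos_right hm']
            have : ((i:ℝ)+1) ≤ j := by exact_mod_cast hlt
            linarith
          linarith
        · have h1 : ((j:ℝ)+1)/m ≤ (i:ℝ)/m := by
            rw [div_le_div_iff_of_pos_right hm']
            have : ((j:ℝ)+1) ≤ i := by exact_mod_cast hlt
            linarith
          linarith
    · intro i hi
      refine ⟨by positivity, ?_⟩
      rw [div_le_one hm']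
      have : (i:ℝ) + 1 ≤ m := by exact_mod_cast hi
      linarith
  · -- summability implies class equality
    intro hS f
    constructor
    · -- Λ#BV implies bounded
      rintro ⟨M, h1, h2⟩
      have hl0 := hpos 0
      have hM : 0 ≤ M := by
        simpa using h1 0 (fun _ => 0) (fun _ => 1) (fun _ => 0)
          ⟨by simp, by simp⟩ (by simp)
      refine ⟨|f 0 0| + 2 * (M * lam 0), ?_⟩
      intro x hx y hy
      have hA : |f x y - f 0 y| ≤ M * lam 0 := by
        rcases eq_or_lt_of_le hx.1 with hx0 | hx0
        · rw [← hx0]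
          simpa using by positivity
        · have := h1 1 (fun _ => 0) (fun _ => x) (fun _ => y)
            ⟨fun i _ => ⟨le_refl 0, hx0, hx.2⟩,
             fun i hi j hj hij => absurd (by omega : i = j) hij⟩
            (fun i _ => hy)
          rw [Finset.sum_range_one, div_le_iff₀ hl0] at this
          exact this
      have hB : |f 0 y - f 0 0| ≤ M * lam 0 := by
        rcases eq_or_lt_of_le hy.1 with hy0 | hy0
        · rw [← hy0]
          simpa using by positivity
        · have := h2 1 (fun _ => 0) (fun _ => y) (fun _ => 0)
            ⟨fun i _ => ⟨le_refl 0, hy0, hy.2⟩,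
             fun i hi j hj hij => absurd (by omega : i = j) hij⟩
            (fun i _ => by norm_num)
          rw [Finset.sum_range_one, div_le_iff₀ hl0] at this
          exact this
      have t1 : |f x y| ≤ |f x y - f 0 y| + |f 0 y| := by
        calc |f x y| = |(f x y - f 0 y) + f 0 y| := by ring_nf
          _ ≤ |f x y - f 0 y| + |f 0 y| := abs_add_le _ _
      have t2 : |f 0 y| ≤ |f 0 y - f 0 0| + |f 0 0| := by
        calc |f 0 y| = |(f 0 y - f 0 0) + f 0 0| := by ring_nf
          _ ≤ |f 0 y - f 0 0| + |f 0 0| := abs_add_le _ _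
      linarith
    · -- bounded implies Λ#BV
      rintro ⟨C, hC⟩
      have hC0 : 0 ≤ C := le_trans (abs_nonneg _)
        (hC 0 (by norm_num) 0 (by norm_num))
      set S : ℝ := ∑' n, 1 / lam n with hSdef
      have key : ∀ (m : ℕ) (g : ℕ → ℝ), (∀ i < m, |g i| ≤ 2 * C) →
          ∑ i ∈ Finset.range m, |g i| / lam i ≤ 2 * C * S := by
        intro m g hg
        calc ∑ i ∈ Finset.range m, |g i| / lam i
            ≤ ∑ i ∈ Finset.range m, 2 * C * (1 / lam i) := by
              apply Finset.sum_le_sum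
              intro i hi
              rw [div_eq_mul_inv, mul_one_div, div_eq_mul_inv]
              have := hpos i
              have h2 : (0:ℝ) ≤ (lam i)⁻¹ := by positivity
              exact mul_le_mul_of_nonneg_right (hg i (Finset.mem_range.mp hi)) h2
          _ = 2 * C * ∑ i ∈ Finset.range m, 1 / lam i := by
              rw [Finset.mul_sum]
          _ ≤ 2 * C * S := by
              apply mul_le_mul_of_nonneg_left _ (by positivity)
              exact Summable.sum_le_tsum (Finset.range m)
                (fun i _ => by have := hpos i; positivity) hS
      refine ⟨2 * C * S, ?_, ?_⟩
      · intro m a b y hno hy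
        apply key
        intro i hi
        obtain ⟨ha0, hab, hb1⟩ := hno.1 i hi
        have hbY := hC (b i) ⟨le_of_lt (lt_of_le_of_lt ha0 hab), hb1⟩ (y i) (hy i hi)
        have haY := hC (a i) ⟨ha0, le_trans (le_of_lt hab) hb1⟩ (y i) (hy i hi)
        calc |f (b i) (y i) - f (a i) (y i)|
            ≤ |f (b i) (y i)| + |f (a i) (y i)| := abs_sub _ _
          _ ≤ 2 * C := by linarith
      · intro m a b x hno hx
        apply key
        intro i hi
        obtain ⟨ha0, hab, hb1⟩ := hno.1 i hi
        have hbY := hC (x i) (hx i hi) (b i) ⟨le_of_lt (lt_of_le_of_lt ha0 hab), hb1⟩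
        have haY := hC (x i) (hx i hi) (a i) ⟨ha0, le_trans (le_of_lt hab) hb1⟩
        calc |f (x i) (b i) - f (x i) (a i)|
            ≤ |f (x i) (b i)| + |f (x i) (a i)| := abs_sub _ _
          _ ≤ 2 * C := by linarith
end

section
/- Let $\Lambda = \{\lambda_n\}$ be a nondecreasing sequence of positive reals satisfying $\limsup_{n\to\infty} \frac{\lambda_n \log(n+1)}{n} < \infty$. Then every function $f : [0,1]^2 \to \mathbb{R}$ in the class $\Lambda^{\#}BV$ belongs to the class $HBV$ of functions of bounded harmonic variation. -/
/-- `HV_1(f) ≤ M`: harmonic variation in the first variable (weights `1/i`,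
here `1/(i+1)` since indexing starts at 0). -/
def HV1 (f : ℝ → ℝ → ℝ) (M : ℝ) : Prop :=
  ∀ (m : ℕ) (a b : ℕ → ℝ) (y : ℝ), Nonoverlap m a b → y ∈ Set.Icc (0:ℝ) 1 →
    ∑ i ∈ Finset.range m, |f (b i) y - f (a i) y| / ((i : ℝ) + 1) ≤ M

/-- `HV_2(f) ≤ M`: harmonic variation in the second variable. -/
def HV2 (f : ℝ → ℝ → ℝ) (M : ℝ) : Prop :=
  ∀ (m : ℕ) (a b : ℕ → ℝ) (x : ℝ), Nonoverlap m a b → x ∈ Set.Icc (0:ℝ) 1 →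
    ∑ j ∈ Finset.range m, |f x (b j) - f x (a j)| / ((j : ℝ) + 1) ≤ M

/-- `HV_{1,2}(f) ≤ M`: mixed harmonic variation. -/
def HV12 (f : ℝ → ℝ → ℝ) (M : ℝ) : Prop :=
  ∀ (m₁ : ℕ) (a₁ b₁ : ℕ → ℝ) (m₂ : ℕ) (a₂ b₂ : ℕ → ℝ),
    Nonoverlap m₁ a₁ b₁ → Nonoverlap m₂ a₂ b₂ →
    ∑ i ∈ Finset.range m₁, ∑ j ∈ Finset.range m₂,
      |f (a₁ i) (a₂ j) - f (a₁ i) (b₂ j) - f (b₁ i) (a₂ j) + f (b₁ i) (b₂ j)| /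
        (((i : ℝ) + 1) * ((j : ℝ) + 1)) ≤ M

/-- The class `HBV` of functions of bounded harmonic variation on `[0,1]²`. -/
def HBV (f : ℝ → ℝ → ℝ) : Prop :=
  ∃ M : ℝ, HV1 f M ∧ HV2 f M ∧ HV12 f M

open Finset MeasureTheory

lemma setIntegral_Ioi_indicator_Iio {x : ℝ} (hx : 0 ≤ x) :
    ∫ t in Set.Ioi 0, (Set.Iio x).indicator 1 t = x := by
  rw [integral_indicator_one measurableSet_Iio, measureReal_restrict_apply measurableSet_Iio,
    Set.Iio_inter_Ioi, Real.volume_real_Ioo_of_le hx, sub_zero]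

lemma integrableOn_Ioi_indicator_Iio (x : ℝ) :
    IntegrableOn ((Set.Iio x).indicator (1 : ℝ → ℝ)) (Set.Ioi 0) := by
  rw [IntegrableOn, integrable_indicator_iff measurableSet_Iio, IntegrableOn,
    Measure.restrict_restrict measurableSet_Iio, Set.Iio_inter_Ioi]
  exact integrableOn_const measure_Ioo_lt_top.ne

lemma integrableOn_Ioi_sum_mul_indicator {ι : Type*} (s : Finset ι) (a x : ι → ℝ) :
    IntegrableOn (fun t => ∑ i ∈ s, a i * (Set.Iio (x i)).indicator 1 t) (Set.Ioi 0) :=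
  integrable_finsetSum s fun i _ => (integrableOn_Ioi_indicator_Iio (x i)).const_mul (a i)

lemma setIntegral_Ioi_sum_mul_indicator {ι : Type*} (s : Finset ι) (a x : ι → ℝ)
    (hx : ∀ i ∈ s, 0 ≤ x i) :
    ∫ t in Set.Ioi 0, ∑ i ∈ s, a i * (Set.Iio (x i)).indicator 1 t = ∑ i ∈ s, a i * x i := by
  rw [integral_finsetSum s fun i _ => (integrableOn_Ioi_indicator_Iio (x i)).const_mul (a i)]
  refine sum_congr rfl fun i hi => ?_
  rw [integral_const_mul, setIntegral_Ioi_indicator_Iio (hx i hi)]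

lemma filter_range_eq_range_card {p : ℕ → Prop} [DecidablePred p] {n : ℕ}
    (hp : ∀ k l, k ≤ l → l < n → p l → p k) :
    (range n).filter p = range #((range n).filter p) := by
  refine eq_of_subset_of_card_le (fun l hl => ?_) (by rw [card_range])
  rw [mem_filter, mem_range] at hl
  have hsub : range (l + 1) ⊆ (range n).filter p := fun k hk => by
    rw [mem_range] at hk
    exact mem_filter.mpr ⟨mem_range.mpr (by omega), hp k l (by omega) hl.1 hl.2⟩
  have := card_le_card hsub
  rw [card_range] at this
  exact mem_range.mpr this

lemma exists_bijOn_antitoneOn_comp {α : Type*} [LinearOrder α] (e : ℕ → α) (n : ℕ) :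
    ∃ ρ : ℕ → ℕ, Set.BijOn ρ (range n) (range n) ∧ AntitoneOn (e ∘ ρ) (range n) := by
  let σ := Tuple.sort (fun i : Fin n => OrderDual.toDual (e i))
  refine ⟨fun k => if h : k < n then σ ⟨k, h⟩ else k, ⟨?_, ?_, ?_⟩, ?_⟩
  · intro k hk
    simp only [coe_range, Set.mem_Iio] at hk ⊢
    simp [hk]
  · intro k hk l hl hkl
    simp only [coe_range, Set.mem_Iio] at hk hl
    simp only [hk, hl, dite_true] at hkl
    simpa using σ.injective (Fin.val_injective hkl)
  · intro i hi
    simp only [coe_range, Set.mem_Iio] at hi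
    exact ⟨σ.symm ⟨i, hi⟩, by simp, by simp⟩
  · intro k hk l hl hkl
    simp only [coe_range, Set.mem_Iio] at hk hl
    simpa [hk, hl] using Tuple.monotone_sort (fun i : Fin n => OrderDual.toDual (e i))
      (show (⟨k, hk⟩ : Fin n) ≤ ⟨l, hl⟩ from hkl)

lemma sum_inv_add_one_le_harmonic (s : Finset ℕ) :
    ∑ i ∈ s, ((i : ℝ) + 1)⁻¹ ≤ harmonic #s := by
  induction s using Finset.induction_on_max with
  | empty => simp
  | insert a s hlt ih =>
    have ha : a ∉ s := fun h => lt_irrefl a (hlt a h)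
    have hcard : #s ≤ a := by simpa using card_le_card fun x hx => mem_range.mpr (hlt x hx)
    rw [sum_insert ha, card_insert_of_notMem ha, harmonic_succ]
    push_cast
    have : ((a : ℝ) + 1)⁻¹ ≤ ((#s : ℝ) + 1)⁻¹ := by gcongr
    linarith

lemma harmonic_card_filter_sq_eq {x : ℕ → ℝ} {n : ℕ} (hx : AntitoneOn x (range n)) (t : ℝ) :
    (harmonic #((range n).filter (t < x ·)) : ℝ) ^ 2 =
      ∑ k ∈ range n, (((harmonic (k + 1) : ℝ)) ^ 2 - (harmonic k : ℝ) ^ 2) *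
        (Set.Iio (x k)).indicator 1 t := by
  have hdown : ∀ k l, k ≤ l → l < n → t < x l → t < x k := fun k l hkl hl htl =>
    htl.trans_le (hx (mem_range.mpr (by omega)) (mem_range.mpr hl) hkl)
  simp only [Set.indicator_apply, Set.mem_Iio, Pi.one_apply, mul_ite, mul_one, mul_zero]
  rw [← sum_filter, filter_range_eq_range_card hdown,
    sum_range_sub (fun k => (harmonic k : ℝ) ^ 2)]
  simp

lemma harmonic_succ_sq_sub_sq_le (k : ℕ) :
    (harmonic (k + 1) : ℝ) ^ 2 - (harmonic k : ℝ) ^ 2 ≤ 5 * Real.log (k + 2) / (k + 1) := by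
  have hk : (0 : ℝ) < k + 1 := by positivity
  have hsucc : (harmonic (k + 1) : ℝ) = harmonic k + ((k : ℝ) + 1)⁻¹ := by
    rw [harmonic_succ]; push_cast; ring
  have hdiff : ((harmonic (k + 1) : ℝ) ^ 2 - (harmonic k : ℝ) ^ 2) * (k + 1) =
      harmonic (k + 1) + harmonic k := by
    rw [hsucc]; field_simp; ring
  have hlog : (harmonic (k + 1) : ℝ) ≤ 1 + Real.log (k + 1) := by
    exact_mod_cast harmonic_le_one_add_log (k + 1)
  have hlog₂ : Real.log 2 ≤ Real.log (k + 2) := Real.log_le_log (by norm_num) (by linarith)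
  have hlog₁ : Real.log (k + 1) ≤ Real.log (k + 2) := Real.log_le_log hk (by linarith)
  rw [le_div_iff₀ hk, hdiff]
  linarith [Real.log_two_gt_d9, inv_pos.mpr hk]

lemma harmonic_succ_sq_sub_sq_le_div {lam C : ℝ} {k : ℕ} (hlam : 0 < lam)
    (hC : lam * Real.log ((k : ℝ) + 2) / ((k : ℝ) + 1) ≤ C) :
    (harmonic (k + 1) : ℝ) ^ 2 - (harmonic k : ℝ) ^ 2 ≤ 5 * C / lam := by
  refine (harmonic_succ_sq_sub_sq_le k).trans ?_
  rw [le_div_iff₀ hlam]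
  calc 5 * Real.log ((k : ℝ) + 2) / ((k : ℝ) + 1) * lam
      = 5 * (lam * Real.log ((k : ℝ) + 2) / ((k : ℝ) + 1)) := by ring
    _ ≤ 5 * C := by linarith

def RowSelectionBound (lam : ℕ → ℝ) (m₁ m₂ : ℕ) (d : ℕ → ℕ → ℝ) (N : ℝ) : Prop :=
  ∀ (k : ℕ) (r c : ℕ → ℕ), Set.InjOn r (range k) → (∀ ℓ < k, r ℓ < m₁ ∧ c ℓ < m₂) →
    ∑ ℓ ∈ range k, d (r ℓ) (c ℓ) / lam ℓ ≤ N

noncomputable def activeRows (m₁ m₂ : ℕ) (d : ℕ → ℕ → ℝ) (t : ℝ) : Finset ℕ :=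
  (range m₁).filter fun i => ∃ j ∈ range m₂, t < d i j

lemma RowSelectionBound.exists_harmonic_sq_layer {lam : ℕ → ℝ} {m₁ m₂ : ℕ} {d : ℕ → ℕ → ℝ} {N : ℝ}
    (h : RowSelectionBound lam m₁ m₂ d N) (hd : ∀ i j, 0 ≤ d i j) :
    ∃ x : ℕ → ℝ, (∀ k, 0 ≤ x k) ∧ ∑ k ∈ range m₁, x k / lam k ≤ N ∧
      ∀ t, 0 ≤ t → (harmonic #(activeRows m₁ m₂ d t) : ℝ) ^ 2 =
        ∑ k ∈ range m₁, ((harmonic (k + 1) : ℝ) ^ 2 - (harmonic k : ℝ) ^ 2) *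
          (Set.Iio (x k)).indicator 1 t := by
  rcases Nat.eq_zero_or_pos m₂ with rfl | hm₂
  · refine ⟨0, fun _ => le_rfl, by simpa using h 0 id id (by simp) (by simp), fun t ht => ?_⟩
    simp [activeRows, Set.indicator_of_notMem (Set.notMem_Iio.mpr ht)]
  have hmax : ∀ i, ∃ c ∈ range m₂, ∀ j ∈ range m₂, d i j ≤ d i c := fun i =>
    exists_max_image _ (d i) (nonempty_range_iff.mpr hm₂.ne')
  choose c hc hcmax using hmax
  obtain ⟨ρ, hρ, hanti⟩ := exists_bijOn_antitoneOn_comp (fun i => d i (c i)) m₁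
  -- `x` lists the row maxima in decreasing order
  refine ⟨fun k => d (ρ k) (c (ρ k)), fun k => hd _ _,
    h m₁ ρ (c ∘ ρ) hρ.injOn fun ℓ hℓ => ⟨mem_range.mp (hρ.mapsTo (mem_range.mpr hℓ)),
      mem_range.mp (hc _)⟩, fun t _ => ?_⟩
  rw [← harmonic_card_filter_sq_eq (x := fun k => d (ρ k) (c (ρ k))) hanti]
  congr 3
  symm
  refine card_nbij ρ (fun k hk => ?_) (hρ.injOn.mono (filter_subset _ _)) fun i hi => ?_
  · simp only [coe_filter, mem_range, Set.mem_ofPred_eq, activeRows] at hk ⊢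
    exact ⟨mem_range.mp (hρ.mapsTo (mem_range.mpr hk.1)), c (ρ k), mem_range.mp (hc _), hk.2⟩
  · simp only [coe_filter, activeRows, mem_range, Set.mem_ofPred_eq] at hi
    obtain ⟨hi, j, hj, htj⟩ := hi
    obtain ⟨k, hk, rfl⟩ := hρ.surjOn (mem_range.mpr hi)
    exact ⟨k, by simpa using ⟨mem_range.mp hk, htj.trans_le (hcmax _ j (mem_range.mpr hj))⟩, rfl⟩

lemma sum_mul_indicator_le_harmonic_mul_harmonic (m₁ m₂ : ℕ) (d : ℕ → ℕ → ℝ) (t : ℝ) :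
    ∑ p ∈ range m₁ ×ˢ range m₂,
        (((p.1 : ℝ) + 1) * ((p.2 : ℝ) + 1))⁻¹ * (Set.Iio (d p.1 p.2)).indicator 1 t ≤
      harmonic #(activeRows m₁ m₂ d t) * harmonic #(activeRows m₂ m₁ (fun j i => d i j) t) := by
  set A := activeRows m₁ m₂ d t
  set B := activeRows m₂ m₁ (fun j i => d i j) t
  have hAB : ∀ p ∈ range m₁ ×ˢ range m₂, t < d p.1 p.2 → p ∈ A ×ˢ B := fun p hp htp => by
    rw [mem_product] at hp ⊢
    exact ⟨mem_filter.mpr ⟨hp.1, p.2, hp.2, htp⟩, mem_filter.mpr ⟨hp.2, p.1, hp.1, htp⟩⟩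
  calc _ = ∑ p ∈ A ×ˢ B,
        (((p.1 : ℝ) + 1) * ((p.2 : ℝ) + 1))⁻¹ * (Set.Iio (d p.1 p.2)).indicator 1 t := by
        refine (sum_subset (product_subset_product (filter_subset _ _) (filter_subset _ _))
          fun p hp hpAB => ?_).symm
        have htp : t ∉ Set.Iio (d p.1 p.2) := fun htp => hpAB (hAB p hp htp)
        rw [Set.indicator_of_notMem htp, mul_zero]
    _ ≤ ∑ p ∈ A ×ˢ B, ((p.1 : ℝ) + 1)⁻¹ * ((p.2 : ℝ) + 1)⁻¹ := by
        refine sum_le_sum fun p _ => ?_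
        rw [mul_inv]
        exact mul_le_of_le_one_right (by positivity) (Set.indicator_le_self' (by simp) t)
    _ = (∑ i ∈ A, ((i : ℝ) + 1)⁻¹) * ∑ j ∈ B, ((j : ℝ) + 1)⁻¹ := by
        rw [sum_mul_sum, sum_product]
    _ ≤ _ := mul_le_mul (sum_inv_add_one_le_harmonic A) (sum_inv_add_one_le_harmonic B)
        (sum_nonneg fun _ _ => by positivity)
        ((sum_nonneg fun _ _ => by positivity).trans (sum_inv_add_one_le_harmonic A))

lemma sum_harmonic_sq_sub_mul_le {lam x : ℕ → ℝ} {K N : ℝ} {n : ℕ} (hpos : ∀ k, 0 < lam k)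
    (hK : ∀ k, (harmonic (k + 1) : ℝ) ^ 2 - (harmonic k : ℝ) ^ 2 ≤ K / lam k)
    (hx : ∀ k, 0 ≤ x k) (hxN : ∑ k ∈ range n, x k / lam k ≤ N) :
    ∑ k ∈ range n, ((harmonic (k + 1) : ℝ) ^ 2 - (harmonic k : ℝ) ^ 2) * x k ≤ K * N := by
  have hK0 : 0 ≤ K := by
    have := hK 0
    norm_num [le_div_iff₀ (hpos 0)] at this
    linarith [hpos 0]
  calc _ ≤ ∑ k ∈ range n, K * (x k / lam k) :=
        sum_le_sum fun k _ => (mul_le_mul_of_nonneg_right (hK k) (hx k)).trans_eq (by ring)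
    _ ≤ K * N := by rw [← mul_sum]; exact mul_le_mul_of_nonneg_left hxN hK0

theorem sum_sum_div_le_of_rowSelectionBound {lam : ℕ → ℝ} {K N : ℝ} {m₁ m₂ : ℕ}
    {d : ℕ → ℕ → ℝ} (hpos : ∀ k, 0 < lam k)
    (hK : ∀ k, (harmonic (k + 1) : ℝ) ^ 2 - (harmonic k : ℝ) ^ 2 ≤ K / lam k)
    (hd : ∀ i j, 0 ≤ d i j) (hrow : RowSelectionBound lam m₁ m₂ d N)
    (hcol : RowSelectionBound lam m₂ m₁ (fun j i => d i j) N) :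
    ∑ i ∈ range m₁, ∑ j ∈ range m₂, d i j / (((i : ℝ) + 1) * ((j : ℝ) + 1)) ≤ K * N := by
  set Δ : ℕ → ℝ := fun k => (harmonic (k + 1) : ℝ) ^ 2 - (harmonic k : ℝ) ^ 2
  obtain ⟨x, hx0, hxN, hxH⟩ := hrow.exists_harmonic_sq_layer hd
  obtain ⟨y, hy0, hyN, hyH⟩ := hcol.exists_harmonic_sq_layer fun j i => hd i j
  calc ∑ i ∈ range m₁, ∑ j ∈ range m₂, d i j / (((i : ℝ) + 1) * ((j : ℝ) + 1))
      = ∫ t in Set.Ioi 0, ∑ p ∈ range m₁ ×ˢ range m₂,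
          (((p.1 : ℝ) + 1) * ((p.2 : ℝ) + 1))⁻¹ * (Set.Iio (d p.1 p.2)).indicator 1 t := by
        rw [setIntegral_Ioi_sum_mul_indicator _ _ _ fun p _ => hd _ _, sum_product]
        simp only [div_eq_inv_mul]
    _ ≤ ∫ t in Set.Ioi 0, 2⁻¹ * (∑ k ∈ range m₁, Δ k * (Set.Iio (x k)).indicator 1 t +
          ∑ k ∈ range m₂, Δ k * (Set.Iio (y k)).indicator 1 t) := by
        refine setIntegral_mono_on (integrableOn_Ioi_sum_mul_indicator _ _ _)
          (((integrableOn_Ioi_sum_mul_indicator _ _ _).add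
            (integrableOn_Ioi_sum_mul_indicator _ _ _)).const_mul _) measurableSet_Ioi
          fun t ht => ?_
        rw [← hxH t (le_of_lt ht), ← hyH t (le_of_lt ht)]
        refine (sum_mul_indicator_le_harmonic_mul_harmonic m₁ m₂ d t).trans ?_
        nlinarith [two_mul_le_add_sq (harmonic #(activeRows m₁ m₂ d t) : ℝ)
          (harmonic #(activeRows m₂ m₁ (fun j i => d i j) t))]
    _ = 2⁻¹ * (∑ k ∈ range m₁, Δ k * x k + ∑ k ∈ range m₂, Δ k * y k) := by
        rw [integral_const_mul, integral_add (integrableOn_Ioi_sum_mul_indicator _ _ _)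
          (integrableOn_Ioi_sum_mul_indicator _ _ _),
          setIntegral_Ioi_sum_mul_indicator _ _ _ fun k _ => hx0 k,
          setIntegral_Ioi_sum_mul_indicator _ _ _ fun k _ => hy0 k]
    _ ≤ 2⁻¹ * (K * N + K * N) := by
        gcongr
        exacts [sum_harmonic_sq_sub_mul_le hpos hK hx0 hxN,
          sum_harmonic_sq_sub_mul_le hpos hK hy0 hyN]
    _ = K * N := by ring

lemma Nonoverlap.comp_s7 {m k : ℕ} {a b : ℕ → ℝ} {r : ℕ → ℕ} (h : Nonoverlap m a b)
    (hr : ∀ ℓ < k, r ℓ < m) (hinj : Set.InjOn r (range k)) :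
    Nonoverlap k (fun ℓ => a (r ℓ)) (fun ℓ => b (r ℓ)) :=
  ⟨fun ℓ hℓ => h.1 (r ℓ) (hr ℓ hℓ), fun i hi j hj hij => h.2 _ (hr i hi) _ (hr j hj)
    fun he => hij (hinj (mem_range.mpr hi) (mem_range.mpr hj) he)⟩

lemma Nonoverlap.left_mem_Icc {m i : ℕ} {a b : ℕ → ℝ} (h : Nonoverlap m a b) (hi : i < m) :
    a i ∈ Set.Icc (0 : ℝ) 1 :=
  have ⟨h0, hab, h1⟩ := h.1 i hi
  ⟨h0, by linarith⟩

lemma Nonoverlap.right_mem_Icc {m i : ℕ} {a b : ℕ → ℝ} (h : Nonoverlap m a b) (hi : i < m) :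
    b i ∈ Set.Icc (0 : ℝ) 1 :=
  have ⟨h0, hab, h1⟩ := h.1 i hi
  ⟨by linarith, h1⟩

lemma RowSelectionBound.transpose_of_le_one {lam : ℕ → ℝ} {m₁ m₂ : ℕ} {d : ℕ → ℕ → ℝ} {N : ℝ}
    (h : RowSelectionBound lam m₁ m₂ d N) (hm₂ : m₂ ≤ 1) :
    RowSelectionBound lam m₂ m₁ (fun j i => d i j) N := by
  intro k c r hc hcr
  have hk : k ≤ m₂ := by
    simpa using card_le_card_of_injOn c (fun ℓ hℓ => mem_range.mpr (hcr ℓ (mem_range.mp hℓ)).1) hc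
  refine h k r c ((Set.Subsingleton.injOn fun ℓ hℓ ℓ' hℓ' => ?_) r) fun ℓ hℓ => (hcr ℓ hℓ).symm
  simp only [coe_range, Set.mem_Iio] at hℓ hℓ'
  omega

lemma LamSharpV1.rowSelectionBound {lam : ℕ → ℝ} {f : ℝ → ℝ → ℝ} {M : ℝ} {m : ℕ}
    {a b : ℕ → ℝ} {y : ℝ} (h : LamSharpV1 lam f M) (hab : Nonoverlap m a b)
    (hy : y ∈ Set.Icc (0 : ℝ) 1) :
    RowSelectionBound lam m 1 (fun i _ => |f (b i) y - f (a i) y|) M :=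
  fun k _ _ hinj hr => h k _ _ (fun _ => y) (hab.comp_s7 (fun ℓ hℓ => (hr ℓ hℓ).1) hinj) fun _ _ => hy

lemma abs_rectDiff_le (f : ℝ → ℝ → ℝ) (a₁ b₁ a₂ b₂ : ℝ) :
    |f a₁ a₂ - f a₁ b₂ - f b₁ a₂ + f b₁ b₂| ≤ |f b₁ a₂ - f a₁ a₂| + |f b₁ b₂ - f a₁ b₂| :=
  calc _ = |(f b₁ b₂ - f a₁ b₂) - (f b₁ a₂ - f a₁ a₂)| := by ring_nf
    _ ≤ _ := (abs_sub _ _).trans_eq (add_comm _ _)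

lemma LamSharpV1.rowSelectionBound_rectDiff {lam : ℕ → ℝ} {f : ℝ → ℝ → ℝ} {M : ℝ}
    {m₁ m₂ : ℕ} {a₁ b₁ a₂ b₂ : ℕ → ℝ} (hlam : ∀ k, 0 ≤ lam k) (h : LamSharpV1 lam f M)
    (h₁ : Nonoverlap m₁ a₁ b₁) (h₂ : Nonoverlap m₂ a₂ b₂) :
    RowSelectionBound lam m₁ m₂ (fun i j =>
      |f (a₁ i) (a₂ j) - f (a₁ i) (b₂ j) - f (b₁ i) (a₂ j) + f (b₁ i) (b₂ j)|) (M + M) := by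
  intro k r c hinj hrc
  have hI := h₁.comp_s7 (fun ℓ hℓ => (hrc ℓ hℓ).1) hinj
  calc _ ≤ ∑ ℓ ∈ range k, (|f (b₁ (r ℓ)) (a₂ (c ℓ)) - f (a₁ (r ℓ)) (a₂ (c ℓ))| / lam ℓ +
        |f (b₁ (r ℓ)) (b₂ (c ℓ)) - f (a₁ (r ℓ)) (b₂ (c ℓ))| / lam ℓ) := by
        refine sum_le_sum fun ℓ _ => ?_
        rw [← add_div]
        exact div_le_div_of_nonneg_right (abs_rectDiff_le f _ _ _ _) (hlam ℓ)
    _ ≤ M + M := by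
        rw [sum_add_distrib]
        exact add_le_add (h k _ _ (fun ℓ => a₂ (c ℓ)) hI fun ℓ hℓ => h₂.left_mem_Icc (hrc ℓ hℓ).2)
          (h k _ _ (fun ℓ => b₂ (c ℓ)) hI fun ℓ hℓ => h₂.right_mem_Icc (hrc ℓ hℓ).2)

lemma LamSharpV1.hV1 {lam : ℕ → ℝ} {f : ℝ → ℝ → ℝ} {K M : ℝ} (hpos : ∀ k, 0 < lam k)
    (hK : ∀ k, (harmonic (k + 1) : ℝ) ^ 2 - (harmonic k : ℝ) ^ 2 ≤ K / lam k)
    (h : LamSharpV1 lam f M) : HV1 f (K * M) := by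
  intro m a b y hab hy
  have hrow := h.rowSelectionBound hab hy
  simpa using sum_sum_div_le_of_rowSelectionBound hpos hK (fun _ _ => abs_nonneg _) hrow
    (hrow.transpose_of_le_one le_rfl)

lemma hV12_of_lamSharpV1_of_lamSharpV2 {lam : ℕ → ℝ} {f : ℝ → ℝ → ℝ} {K M : ℝ}
    (hpos : ∀ k, 0 < lam k)
    (hK : ∀ k, (harmonic (k + 1) : ℝ) ^ 2 - (harmonic k : ℝ) ^ 2 ≤ K / lam k)
    (h₁ : LamSharpV1 lam f M) (h₂ : LamSharpV2 lam f M) : HV12 f (K * (M + M)) := by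
  intro m₁ a₁ b₁ m₂ a₂ b₂ hI hJ
  have hcol := LamSharpV1.rowSelectionBound_rectDiff (f := fun x y => f y x)
    (fun k => (hpos k).le) h₂ hJ hI
  simp only [sub_right_comm _ (f (b₁ _) _)] at hcol
  exact sum_sum_div_le_of_rowSelectionBound hpos hK (fun _ _ => abs_nonneg _)
    (h₁.rowSelectionBound_rectDiff (fun k => (hpos k).le) hI hJ) hcol

lemma HBV.of_bounds {f : ℝ → ℝ → ℝ} {A B D : ℝ} (h₁ : HV1 f A) (h₂ : HV2 f B)
    (h₁₂ : HV12 f D) : HBV f :=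
  ⟨max A (max B D), fun m a b y hab hy => (h₁ m a b y hab hy).trans (le_max_left _ _),
    fun m a b x hab hx => (h₂ m a b x hab hx).trans ((le_max_left _ _).trans (le_max_right _ _)),
    fun m₁ a₁ b₁ m₂ a₂ b₂ hI hJ =>
      (h₁₂ m₁ a₁ b₁ m₂ a₂ b₂ hI hJ).trans ((le_max_right _ _).trans (le_max_right _ _))⟩

theorem lamSharpBV_subset_HBV_general
    (lam : ℕ → ℝ) (hpos : ∀ n, 0 < lam n)
    (hbdd : ∃ C : ℝ, ∀ n : ℕ, lam n * Real.log ((n : ℝ) + 2) / ((n : ℝ) + 1) ≤ C)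
    (f : ℝ → ℝ → ℝ) (hf : LamSharpBV lam f) :
    HBV f := by
  obtain ⟨C, hC⟩ := hbdd
  obtain ⟨M, h₁, h₂⟩ := hf
  have hK k := harmonic_succ_sq_sub_sq_le_div (hpos k) (hC k)
  -- `LamSharpV2` and `HV2` of `f` are `LamSharpV1` and `HV1` of the transposed function.
  exact HBV.of_bounds (h₁.hV1 hpos hK) (LamSharpV1.hV1 (f := fun x y => f y x) hpos hK h₂)
    (hV12_of_lamSharpV1_of_lamSharpV2 hpos hK h₁ h₂)

/-- Theorem [GMJ], part a: if `limsup λ_n log(n+1)/n < ∞` then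
`Λ^{#}BV ⊆ HBV`. -/
theorem lamSharpBV_subset_HBV
    (lam : ℕ → ℝ) (hmono : Monotone lam) (hpos : ∀ n, 0 < lam n)
    (hbdd : ∃ C : ℝ, ∀ n : ℕ, lam n * Real.log ((n : ℝ) + 2) / ((n : ℝ) + 1) ≤ C)
    (f : ℝ → ℝ → ℝ) (hf : LamSharpBV lam f) :
    HBV f :=
  lamSharpBV_subset_HBV_general lam hpos hbdd f hf
end

section
/- Let $\gamma_n > 0$ be nonincreasing with $\sum_{n=1}^\infty \gamma_n/n < \infty$, and set $\lambda_n = n\gamma_n$. Then every function $f : [0,1]^2 \to \mathbb{R}$ of bounded partial $\Lambda$-variation (class $P\Lambda BV$) belongs to the class $HBV$ of bounded harmonic variation. -/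
private lemma weight_bound {d p q g g' : ℝ} (hd : 0 ≤ d) (hp : 0 < p) (hq : 0 < q)
    (hg : 0 < g) (hg' : g ≤ g') :
    d / (p * q) ≤ g' / p * (d / (q * g)) := by
  have h1 : g' / p * (d / (q * g)) = (g' * d) / (p * (q * g)) := by
    field_simp
  rw [h1, div_le_div_iff₀ (by positivity) (by positivity)]
  nlinarith [mul_le_mul_of_nonneg_left hg' (by positivity : (0:ℝ) ≤ d * p * q)]

/-- Goginava–Sahakian, Theorem 1, part 1: for `λ_n = n γ_n` with
`γ_n` nonincreasing positive and `∑ γ_n / n < ∞`, every function of bounded partial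
`Λ`-variation has bounded harmonic variation: `PΛBV ⊆ HBV`. -/
theorem pLamBV_subset_HBV
    (γ : ℕ → ℝ) (hpos : ∀ n, 0 < γ n) (hanti : Antitone γ)
    (hsum : Summable (fun n => γ n / ((n : ℝ) + 1)))
    (f : ℝ → ℝ → ℝ)
    (hPV : ∃ M : ℝ,
      (∀ (m : ℕ) (a b : ℕ → ℝ) (y : ℝ), Nonoverlap m a b → y ∈ Set.Icc (0:ℝ) 1 →
        ∑ i ∈ Finset.range m, |f (b i) y - f (a i) y| / (((i : ℝ) + 1) * γ i) ≤ M) ∧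
      (∀ (m : ℕ) (a b : ℕ → ℝ) (x : ℝ), Nonoverlap m a b → x ∈ Set.Icc (0:ℝ) 1 →
        ∑ j ∈ Finset.range m, |f x (b j) - f x (a j)| / (((j : ℝ) + 1) * γ j) ≤ M)) :
    HBV f := by
  obtain ⟨M, hM1, hM2⟩ := hPV
  have hno0 : Nonoverlap 0 (fun _ => (0:ℝ)) (fun _ => (1:ℝ)) :=
    ⟨fun i hi => absurd hi (Nat.not_lt_zero i), fun i hi => absurd hi (Nat.not_lt_zero i)⟩
  have hMnn : 0 ≤ M := by
    have := hM1 0 (fun _ => (0:ℝ)) (fun _ => (1:ℝ)) 0 hno0 ⟨le_refl 0, zero_le_one⟩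
    simpa using this
  set C := ∑' n, γ n / ((n : ℝ) + 1) with hCdef
  have hterm_nn : ∀ n : ℕ, 0 ≤ γ n / ((n : ℝ) + 1) := fun n => by
    have := (hpos n).le; positivity
  have hCnn : 0 ≤ C := tsum_nonneg hterm_nn
  have hpart : ∀ m : ℕ, ∑ i ∈ Finset.range m, γ i / ((i : ℝ) + 1) ≤ C := fun m =>
    Summable.sum_le_tsum _ (fun i _ => hterm_nn i) hsum
  have hMC : 0 ≤ M * C := mul_nonneg hMnn hCnn
  refine ⟨γ 0 * M + 4 * (M * C), ?_, ?_, ?_⟩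
  · -- HV1
    intro m a b y hab hy
    have h1 : ∑ i ∈ Finset.range m, |f (b i) y - f (a i) y| / ((i : ℝ) + 1)
        ≤ ∑ i ∈ Finset.range m, γ 0 * (|f (b i) y - f (a i) y| / (((i : ℝ) + 1) * γ i)) := by
      refine Finset.sum_le_sum fun i _ => ?_
      have := weight_bound (abs_nonneg (f (b i) y - f (a i) y)) one_pos
        (by positivity : (0:ℝ) < (i : ℝ) + 1) (hpos i) (hanti (Nat.zero_le i))
      simpa using this
    rw [← Finset.mul_sum] at h1
    have h2 := hM1 m a b y hab hy
    nlinarith [mul_le_mul_of_nonneg_left h2 (hpos 0).le]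
  · -- HV2
    intro m a b x hab hx
    have h1 : ∑ j ∈ Finset.range m, |f x (b j) - f x (a j)| / ((j : ℝ) + 1)
        ≤ ∑ j ∈ Finset.range m, γ 0 * (|f x (b j) - f x (a j)| / (((j : ℝ) + 1) * γ j)) := by
      refine Finset.sum_le_sum fun j _ => ?_
      have := weight_bound (abs_nonneg (f x (b j) - f x (a j))) one_pos
        (by positivity : (0:ℝ) < (j : ℝ) + 1) (hpos j) (hanti (Nat.zero_le j))
      simpa using this
    rw [← Finset.mul_sum] at h1
    have h2 := hM2 m a b x hab hx
    nlinarith [mul_le_mul_of_nonneg_left h2 (hpos 0).le]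
  · -- HV12
    intro m₁ a₁ b₁ m₂ a₂ b₂ hab₁ hab₂
    have hx : ∀ i < m₁, a₁ i ∈ Set.Icc (0:ℝ) 1 ∧ b₁ i ∈ Set.Icc (0:ℝ) 1 := by
      intro i hi
      obtain ⟨h0, h1, h2⟩ := hab₁.1 i hi
      exact ⟨⟨h0, le_trans h1.le h2⟩, ⟨le_trans h0 h1.le, h2⟩⟩
    have hy : ∀ j < m₂, a₂ j ∈ Set.Icc (0:ℝ) 1 ∧ b₂ j ∈ Set.Icc (0:ℝ) 1 := by
      intro j hj
      obtain ⟨h0, h1, h2⟩ := hab₂.1 j hj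
      exact ⟨⟨h0, le_trans h1.le h2⟩, ⟨le_trans h0 h1.le, h2⟩⟩
    -- termwise bound
    have step1 : ∀ i ∈ Finset.range m₁, ∀ j ∈ Finset.range m₂,
        |f (a₁ i) (a₂ j) - f (a₁ i) (b₂ j) - f (b₁ i) (a₂ j) + f (b₁ i) (b₂ j)| /
          (((i : ℝ) + 1) * ((j : ℝ) + 1))
        ≤ (if i ≤ j then γ i / ((i : ℝ) + 1) *
              ((|f (a₁ i) (b₂ j) - f (a₁ i) (a₂ j)| + |f (b₁ i) (b₂ j) - f (b₁ i) (a₂ j)|) /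
                (((j : ℝ) + 1) * γ j)) else 0)
          + (if i ≤ j then 0 else γ j / ((j : ℝ) + 1) *
              ((|f (b₁ i) (a₂ j) - f (a₁ i) (a₂ j)| + |f (b₁ i) (b₂ j) - f (a₁ i) (b₂ j)|) /
                (((i : ℝ) + 1) * γ i))) := by
      intro i _ j _
      by_cases hij : i ≤ j
      · simp only [if_pos hij, add_zero]
        have hT : |f (a₁ i) (a₂ j) - f (a₁ i) (b₂ j) - f (b₁ i) (a₂ j) + f (b₁ i) (b₂ j)|
            ≤ |f (a₁ i) (b₂ j) - f (a₁ i) (a₂ j)| + |f (b₁ i) (b₂ j) - f (b₁ i) (a₂ j)| := by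
          have e : f (a₁ i) (a₂ j) - f (a₁ i) (b₂ j) - f (b₁ i) (a₂ j) + f (b₁ i) (b₂ j)
              = (f (a₁ i) (a₂ j) - f (a₁ i) (b₂ j)) + (f (b₁ i) (b₂ j) - f (b₁ i) (a₂ j)) := by
            ring
          rw [e]
          refine (abs_add_le _ _).trans ?_
          rw [abs_sub_comm (f (a₁ i) (a₂ j))]
        refine le_trans ((div_le_div_iff_of_pos_right (by positivity)).mpr hT) ?_
        exact weight_bound (by positivity) (by positivity) (by positivity) (hpos j) (hanti hij)
      · simp only [if_neg hij, zero_add]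
        have hji : j ≤ i := le_of_lt (lt_of_not_ge hij)
        have hT : |f (a₁ i) (a₂ j) - f (a₁ i) (b₂ j) - f (b₁ i) (a₂ j) + f (b₁ i) (b₂ j)|
            ≤ |f (b₁ i) (a₂ j) - f (a₁ i) (a₂ j)| + |f (b₁ i) (b₂ j) - f (a₁ i) (b₂ j)| := by
          have e : f (a₁ i) (a₂ j) - f (a₁ i) (b₂ j) - f (b₁ i) (a₂ j) + f (b₁ i) (b₂ j)
              = (f (a₁ i) (a₂ j) - f (b₁ i) (a₂ j)) + (f (b₁ i) (b₂ j) - f (a₁ i) (b₂ j)) := by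
            ring
          rw [e]
          refine (abs_add_le _ _).trans ?_
          rw [abs_sub_comm (f (a₁ i) (a₂ j))]
        rw [mul_comm ((i : ℝ) + 1)]
        refine le_trans ((div_le_div_iff_of_pos_right (by positivity)).mpr hT) ?_
        exact weight_bound (by positivity) (by positivity) (by positivity) (hpos i) (hanti hji)
    -- split the double sum
    have hsplit : ∑ i ∈ Finset.range m₁, ∑ j ∈ Finset.range m₂,
        |f (a₁ i) (a₂ j) - f (a₁ i) (b₂ j) - f (b₁ i) (a₂ j) + f (b₁ i) (b₂ j)| /
          (((i : ℝ) + 1) * ((j : ℝ) + 1))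
        ≤ (∑ i ∈ Finset.range m₁, ∑ j ∈ Finset.range m₂,
            (if i ≤ j then γ i / ((i : ℝ) + 1) *
              ((|f (a₁ i) (b₂ j) - f (a₁ i) (a₂ j)| + |f (b₁ i) (b₂ j) - f (b₁ i) (a₂ j)|) /
                (((j : ℝ) + 1) * γ j)) else 0))
          + (∑ i ∈ Finset.range m₁, ∑ j ∈ Finset.range m₂,
            (if i ≤ j then 0 else γ j / ((j : ℝ) + 1) *
              ((|f (b₁ i) (a₂ j) - f (a₁ i) (a₂ j)| + |f (b₁ i) (b₂ j) - f (a₁ i) (b₂ j)|) /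
                (((i : ℝ) + 1) * γ i)))) := by
      rw [← Finset.sum_add_distrib]
      refine Finset.sum_le_sum fun i hi => ?_
      rw [← Finset.sum_add_distrib]
      exact Finset.sum_le_sum fun j hj => step1 i hi j hj
    -- first part: i ≤ j
    have hP1 : ∑ i ∈ Finset.range m₁, ∑ j ∈ Finset.range m₂,
        (if i ≤ j then γ i / ((i : ℝ) + 1) *
          ((|f (a₁ i) (b₂ j) - f (a₁ i) (a₂ j)| + |f (b₁ i) (b₂ j) - f (b₁ i) (a₂ j)|) /
            (((j : ℝ) + 1) * γ j)) else 0) ≤ 2 * (M * C) := by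
      have inner : ∀ i ∈ Finset.range m₁, ∑ j ∈ Finset.range m₂,
          (if i ≤ j then γ i / ((i : ℝ) + 1) *
            ((|f (a₁ i) (b₂ j) - f (a₁ i) (a₂ j)| + |f (b₁ i) (b₂ j) - f (b₁ i) (a₂ j)|) /
              (((j : ℝ) + 1) * γ j)) else 0)
          ≤ γ i / ((i : ℝ) + 1) * (2 * M) := by
        intro i hi
        have hia := (hx i (Finset.mem_range.mp hi)).1
        have hib := (hx i (Finset.mem_range.mp hi)).2
        have hb1 := hM2 m₂ a₂ b₂ (a₁ i) hab₂ hia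
        have hb2 := hM2 m₂ a₂ b₂ (b₁ i) hab₂ hib
        have h3 : ∑ j ∈ Finset.range m₂,
            (if i ≤ j then γ i / ((i : ℝ) + 1) *
              ((|f (a₁ i) (b₂ j) - f (a₁ i) (a₂ j)| + |f (b₁ i) (b₂ j) - f (b₁ i) (a₂ j)|) /
                (((j : ℝ) + 1) * γ j)) else 0)
            ≤ ∑ j ∈ Finset.range m₂, γ i / ((i : ℝ) + 1) *
              ((|f (a₁ i) (b₂ j) - f (a₁ i) (a₂ j)| + |f (b₁ i) (b₂ j) - f (b₁ i) (a₂ j)|) /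
                (((j : ℝ) + 1) * γ j)) := by
          refine Finset.sum_le_sum fun j _ => ?_
          split
          · exact le_refl _
          · have := (hpos i).le
            have := (hpos j).le
            positivity
        refine h3.trans ?_
        rw [← Finset.mul_sum]
        refine mul_le_mul_of_nonneg_left ?_ (by have := (hpos i).le; positivity)
        have h4 : ∑ j ∈ Finset.range m₂,
            (|f (a₁ i) (b₂ j) - f (a₁ i) (a₂ j)| + |f (b₁ i) (b₂ j) - f (b₁ i) (a₂ j)|) /
              (((j : ℝ) + 1) * γ j)
            = (∑ j ∈ Finset.range m₂, |f (a₁ i) (b₂ j) - f (a₁ i) (a₂ j)| /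
                (((j : ℝ) + 1) * γ j))
              + ∑ j ∈ Finset.range m₂, |f (b₁ i) (b₂ j) - f (b₁ i) (a₂ j)| /
                (((j : ℝ) + 1) * γ j) := by
          rw [← Finset.sum_add_distrib]
          exact Finset.sum_congr rfl fun j _ => add_div _ _ _
        rw [h4]
        linarith
      have h5 := Finset.sum_le_sum inner
      refine h5.trans ?_
      have h6 : ∑ i ∈ Finset.range m₁, γ i / ((i : ℝ) + 1) * (2 * M)
          = (∑ i ∈ Finset.range m₁, γ i / ((i : ℝ) + 1)) * (2 * M) := by
        rw [Finset.sum_mul]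
      rw [h6]
      have h7 := mul_le_mul_of_nonneg_right (hpart m₁) (by linarith : (0:ℝ) ≤ 2 * M)
      linarith
    -- second part: j < i
    have hP2 : ∑ i ∈ Finset.range m₁, ∑ j ∈ Finset.range m₂,
        (if i ≤ j then 0 else γ j / ((j : ℝ) + 1) *
          ((|f (b₁ i) (a₂ j) - f (a₁ i) (a₂ j)| + |f (b₁ i) (b₂ j) - f (a₁ i) (b₂ j)|) /
            (((i : ℝ) + 1) * γ i))) ≤ 2 * (M * C) := by
      rw [Finset.sum_comm]
      have inner : ∀ j ∈ Finset.range m₂, ∑ i ∈ Finset.range m₁,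
          (if i ≤ j then 0 else γ j / ((j : ℝ) + 1) *
            ((|f (b₁ i) (a₂ j) - f (a₁ i) (a₂ j)| + |f (b₁ i) (b₂ j) - f (a₁ i) (b₂ j)|) /
              (((i : ℝ) + 1) * γ i)))
          ≤ γ j / ((j : ℝ) + 1) * (2 * M) := by
        intro j hj
        have hja := (hy j (Finset.mem_range.mp hj)).1
        have hjb := (hy j (Finset.mem_range.mp hj)).2
        have hb1 := hM1 m₁ a₁ b₁ (a₂ j) hab₁ hja
        have hb2 := hM1 m₁ a₁ b₁ (b₂ j) hab₁ hjb
        have h3 : ∑ i ∈ Finset.range m₁,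
            (if i ≤ j then 0 else γ j / ((j : ℝ) + 1) *
              ((|f (b₁ i) (a₂ j) - f (a₁ i) (a₂ j)| + |f (b₁ i) (b₂ j) - f (a₁ i) (b₂ j)|) /
                (((i : ℝ) + 1) * γ i)))
            ≤ ∑ i ∈ Finset.range m₁, γ j / ((j : ℝ) + 1) *
              ((|f (b₁ i) (a₂ j) - f (a₁ i) (a₂ j)| + |f (b₁ i) (b₂ j) - f (a₁ i) (b₂ j)|) /
                (((i : ℝ) + 1) * γ i)) := by
          refine Finset.sum_le_sum fun i _ => ?_
          split
          · have := (hpos i).le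
            have := (hpos j).le
            positivity
          · exact le_refl _
        refine h3.trans ?_
        rw [← Finset.mul_sum]
        refine mul_le_mul_of_nonneg_left ?_ (by have := (hpos j).le; positivity)
        have h4 : ∑ i ∈ Finset.range m₁,
            (|f (b₁ i) (a₂ j) - f (a₁ i) (a₂ j)| + |f (b₁ i) (b₂ j) - f (a₁ i) (b₂ j)|) /
              (((i : ℝ) + 1) * γ i)
            = (∑ i ∈ Finset.range m₁, |f (b₁ i) (a₂ j) - f (a₁ i) (a₂ j)| /
                (((i : ℝ) + 1) * γ i))
              + ∑ i ∈ Finset.range m₁, |f (b₁ i) (b₂ j) - f (a₁ i) (b₂ j)| /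
                (((i : ℝ) + 1) * γ i) := by
          rw [← Finset.sum_add_distrib]
          exact Finset.sum_congr rfl fun i _ => add_div _ _ _
        rw [h4]
        linarith
      have h5 := Finset.sum_le_sum inner
      refine h5.trans ?_
      have h6 : ∑ j ∈ Finset.range m₂, γ j / ((j : ℝ) + 1) * (2 * M)
          = (∑ j ∈ Finset.range m₂, γ j / ((j : ℝ) + 1)) * (2 * M) := by
        rw [Finset.sum_mul]
      rw [h6]
      have h7 := mul_le_mul_of_nonneg_right (hpart m₂) (by linarith : (0:ℝ) ≤ 2 * M)
      linarith
    have hg0M : 0 ≤ γ 0 * M := mul_nonneg (hpos 0).le hMnn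
    linarith
end
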